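/- arXiv:2112.12036 — 6 statements merged into one kernel-verified Lean document; each statement's English description precedes it below -/
import Mathlib

section
/- Assume T is a metrizable Choquet simplex and S ⊆ ∂_e(T) is a compact subset. Then closure(conv(S)) = M_S. -/
open MeasureTheory

/-- `t ∈ E` is the barycenter of the measure `μ` on `E` if `φ t = ∫ φ dμ` for every
continuous real-linear functional `φ : E → ℝ`. -/
def IsBarycenter {E : Type*} [AddCommGroup E] [Module ℝ E] [TopologicalSpace E]
    [MeasurableSpace E] (μ : Measure E) (t : E) : Prop :=
  ∀ φ : E →L[ℝ] ℝ, φ t = ∫ x, φ x ∂μ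

/-- For `S ⊆ ∂ₑ(T)`, `MSet T S` is the set of points `t ∈ T` that are the barycenter of
some Borel probability measure `μ` on `T` (i.e. `μ Tᶜ = 0`) with `μ (T \ S) = 0`. -/
def MSet {E : Type*} [AddCommGroup E] [Module ℝ E] [TopologicalSpace E]
    [MeasurableSpace E] (T S : Set E) : Set E :=
  {t | t ∈ T ∧ ∃ μ : Measure E, IsProbabilityMeasure μ ∧ μ Tᶜ = 0 ∧
    IsBarycenter μ t ∧ μ (T \ S) = 0}

/-- `T` is a (metrizable) Choquet simplex if every `t ∈ T` is the barycenter of exactly one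
Borel probability measure on `T` concentrated on the extreme boundary of `T`. -/
def IsChoquetSimplex {E : Type*} [AddCommGroup E] [Module ℝ E] [TopologicalSpace E]
    [MeasurableSpace E] (T : Set E) : Prop :=
  ∀ t ∈ T, ∃! μ : Measure E, IsProbabilityMeasure μ ∧ μ Tᶜ = 0 ∧
    IsBarycenter μ t ∧ μ (T \ (T.extremePoints ℝ)) = 0

open Filter Topology Set


lemma aux_discrete {E : Type*} [AddCommGroup E] [Module ℝ E] [TopologicalSpace E]
    [MeasurableSpace E] [BorelSpace E] {S : Set E} {u : E}
    (hu : u ∈ convexHull ℝ S) :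
    ∃ ν : Measure S, IsProbabilityMeasure ν ∧
      ∀ φ : E →L[ℝ] ℝ, ∫ x : S, φ x ∂ν = φ u := by
  classical
  rw [convexHull_eq] at hu
  obtain ⟨ι, t, w, z, hw0, hw1, hz, hcm⟩ := hu
  set ν : Measure S := ∑ i ∈ t.attach, ENNReal.ofReal (w i) • Measure.dirac (⟨z i, hz i i.2⟩ : S)
    with hν
  have hprob : IsProbabilityMeasure ν := by
    constructor
    rw [hν, Measure.finset_sum_apply]
    simp only [Measure.smul_apply, measure_univ, smul_eq_mul, mul_one]
    rw [Finset.sum_attach t (fun i => ENNReal.ofReal (w i)),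
      ← ENNReal.ofReal_sum_of_nonneg hw0, hw1, ENNReal.ofReal_one]
  refine ⟨ν, hprob, fun φ => ?_⟩
  have hsm : StronglyMeasurable (fun x : S => φ (x : E)) :=
    (φ.continuous.comp continuous_subtype_val).stronglyMeasurable
  have hInt : ∀ i : t, Integrable (fun x : S => φ (x : E))
      (ENNReal.ofReal (w i) • Measure.dirac (⟨z i, hz i i.2⟩ : S)) := by
    intro i
    refine Integrable.smul_measure ?_ ENNReal.ofReal_ne_top
    exact (integrable_const _).congr (ae_eq_dirac' hsm.measurable).symm
  rw [hν, integral_finset_sum_measure (fun i _ => hInt i)]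
  have h1 : ∀ i : t, ∫ x : S, φ (x : E) ∂(ENNReal.ofReal (w i) • Measure.dirac (⟨z i, hz i i.2⟩ : S))
      = w i * φ (z i) := by
    intro i
    rw [integral_smul_measure, integral_dirac' _ _ hsm]
    rw [ENNReal.toReal_ofReal (hw0 i i.2)]
    rfl
  rw [Finset.sum_congr rfl (fun i _ => h1 i)]
  rw [← hcm, Finset.centerMass_eq_of_sum_1 _ _ hw1, map_sum]
  have h2 : ∀ i ∈ t, φ (w i • z i) = w i * φ (z i) := fun i _ => φ.map_smul (w i) (z i)
  rw [Finset.sum_congr rfl h2, Finset.sum_attach t (fun i => w i * φ (z i))]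


lemma aux_partition {X : Type*} [MetricSpace X] [CompactSpace X] [Nonempty X]
    [MeasurableSpace X] [BorelSpace X] :
    ∃ (m M : ℕ → ℕ) (π : ℕ → X → ℕ),
      (∀ k, 0 < m k) ∧ (∀ k, 0 < M k) ∧ (∀ k, m (k+1) = m k * M (k+1)) ∧
      (∀ k x, π k x < m k) ∧
      (∀ k i, MeasurableSet (π k ⁻¹' {i})) ∧
      (∀ k x y, π k x = π k y → dist x y ≤ (2⁻¹ : ℝ)^k / 2) ∧
      (∀ k x, π k x = π (k+1) x / M (k+1)) := by
  classical
  have cov : ∀ k : ℕ, ∃ (Mk : ℕ) (cen : ℕ → X), 0 < Mk ∧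
      ∀ x : X, ∃ j, j < Mk ∧ dist x (cen j) < (2⁻¹:ℝ)^k/4 := by
    intro k
    have hr : (0:ℝ) < (2⁻¹:ℝ)^k/4 := by positivity
    obtain ⟨s, hs⟩ := IsCompact.elim_finite_subcover isCompact_univ
      (fun c : X => Metric.ball c ((2⁻¹:ℝ)^k/4)) (fun _ => Metric.isOpen_ball)
      (fun x _ => mem_iUnion.2 ⟨x, Metric.mem_ball_self hr⟩)
    set L := s.toList with hL
    have key : ∀ x : X, ∃ j, j < L.length ∧
        dist x (L.getD j (Classical.arbitrary X)) < (2⁻¹:ℝ)^k/4 := by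
      intro x
      have hx := hs (mem_univ x)
      rw [mem_iUnion₂] at hx
      obtain ⟨c, hc, hxc⟩ := hx
      have hcL : c ∈ L := Finset.mem_toList.mpr hc
      obtain ⟨j, hj, hje⟩ := List.mem_iff_getElem.mp hcL
      refine ⟨j, hj, ?_⟩
      rw [List.getD_eq_getElem?_getD, List.getElem?_eq_getElem hj]
      simpa [hje] using hxc
    refine ⟨L.length, fun j => L.getD j (Classical.arbitrary X), ?_, key⟩
    obtain ⟨j, hj, _⟩ := key (Classical.arbitrary X)
    omega
  choose M cen hM hcov using cov
  have hsig : ∀ k, ∃ σ : X → ℕ, ∀ x,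
      ((σ x < M k ∧ dist x (cen k (σ x)) < (2⁻¹:ℝ)^k/4) ∧
       ∀ j, j < σ x → ¬(j < M k ∧ dist x (cen k j) < (2⁻¹:ℝ)^k/4)) := by
    intro k
    exact ⟨fun x => Nat.find (hcov k x), fun x =>
      ⟨Nat.find_spec (hcov k x), fun j hj => Nat.find_min (hcov k x) hj⟩⟩
  choose σ hσ using hsig
  have hσfib : ∀ k i, MeasurableSet (σ k ⁻¹' {i}) := by
    intro k i
    have hPm : ∀ (j : ℕ), MeasurableSet {x : X | j < M k ∧ dist x (cen k j) < (2⁻¹:ℝ)^k/4} := by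
      intro j
      by_cases h : j < M k
      · simp only [h, true_and]
        exact measurableSet_ball
      · simp only [h, false_and, setOf_false]
        exact MeasurableSet.empty
    have heq : σ k ⁻¹' {i} =
        ({x | i < M k ∧ dist x (cen k i) < (2⁻¹:ℝ)^k/4} ∩
         ⋂ j ∈ Finset.range i, {x | j < M k ∧ dist x (cen k j) < (2⁻¹:ℝ)^k/4}ᶜ) := by
      ext x
      simp only [mem_preimage, mem_singleton_iff, mem_inter_iff, mem_setOf_eq,
        Finset.mem_range, mem_iInter, mem_compl_iff]
      constructor
      · rintro rfl
        exact ⟨(hσ k x).1, fun j hj => (hσ k x).2 j hj⟩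
      · rintro ⟨hPi, hmin⟩
        rcases lt_trichotomy (σ k x) i with h | h | h
        · exact absurd (hσ k x).1 (hmin _ h)
        · exact h
        · exact absurd hPi ((hσ k x).2 i h)
    rw [heq]
    exact (hPm i).inter (MeasurableSet.biInter ((Finset.range i).countable_toSet)
      fun j _ => (hPm j).compl)
  refine ⟨fun k => Nat.rec (M 0) (fun k' ih => ih * M (k'+1)) k, M,
    fun k => Nat.rec (σ 0) (fun k' ih x => ih x * M (k'+1) + σ (k'+1) x) k,
    ?_, hM, fun k => rfl, ?_, ?_, ?_, ?_⟩
  · intro k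
    induction k with
    | zero => exact hM 0
    | succ k ih => exact Nat.mul_pos ih (hM (k+1))
  · intro k
    induction k with
    | zero => exact fun x => (hσ 0 x).1.1
    | succ k ih =>
      intro x
      calc (Nat.rec (σ 0) (fun k' ih x => ih x * M (k'+1) + σ (k'+1) x) k x) * M (k+1) + σ (k+1) x
          < (Nat.rec (σ 0) (fun k' ih x => ih x * M (k'+1) + σ (k'+1) x) k x) * M (k+1) + M (k+1) :=
            Nat.add_lt_add_left (hσ (k+1) x).1.1 _
        _ = ((Nat.rec (σ 0) (fun k' ih x => ih x * M (k'+1) + σ (k'+1) x) k x) + 1) * M (k+1) := by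
            ring
        _ ≤ (Nat.rec (M 0) (fun k' ih => ih * M (k'+1)) k) * M (k+1) :=
            Nat.mul_le_mul_right _ (ih x)
  · intro k
    induction k with
    | zero => exact hσfib 0
    | succ k ih =>
      intro i
      have heq : (fun x => Nat.rec (σ 0) (fun k' ih x => ih x * M (k'+1) + σ (k'+1) x) (k+1) x) ⁻¹' {i}
          = ((fun x => Nat.rec (σ 0) (fun k' ih x => ih x * M (k'+1) + σ (k'+1) x) k x) ⁻¹' {i / M (k+1)})
            ∩ (σ (k+1) ⁻¹' {i % M (k+1)}) := by
        ext x
        simp only [mem_preimage, mem_singleton_iff, mem_inter_iff]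
        constructor
        · rintro rfl
          constructor
          · rw [Nat.mul_comm, Nat.mul_add_div (hM (k+1)),
              Nat.div_eq_of_lt (hσ (k+1) x).1.1, Nat.add_zero]
          · rw [Nat.mul_add_mod', Nat.mod_eq_of_lt (hσ (k+1) x).1.1]
        · rintro ⟨h1, h2⟩
          show _ * M (k+1) + σ (k+1) x = i
          rw [h1, h2, Nat.mul_comm, Nat.div_add_mod]
      rw [heq]
      exact (ih _).inter (hσfib (k+1) _)
  · intro k
    have hsame : ∀ x y : X, σ k x = σ k y → dist x y ≤ (2⁻¹:ℝ)^k / 2 := by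
      intro x y h
      have h1 := (hσ k x).1.2
      have h2 := (hσ k y).1.2
      rw [h] at h1
      have := dist_triangle_right x y (cen k (σ k y))
      have hpow : ((2:ℝ)⁻¹)^k/4 + ((2:ℝ)⁻¹)^k/4 = ((2:ℝ)⁻¹)^k/2 := by ring
      linarith
    intro x y h
    cases k with
    | zero => exact hsame x y h
    | succ k =>
      apply hsame
      have : ∀ z : X, σ (k+1) z =
          (Nat.rec (σ 0) (fun k' ih x => ih x * M (k'+1) + σ (k'+1) x) (k+1) z) % M (k+1) := by
        intro z
        show σ (k+1) z = (_ * M (k+1) + σ (k+1) z) % M (k+1)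
        rw [Nat.mul_add_mod', Nat.mod_eq_of_lt (hσ (k+1) z).1.1]
      rw [this x, this y]
      exact congrArg (fun a => a % M (k+1)) h
  · intro k x
    show _ = (_ * M (k+1) + σ (k+1) x) / M (k+1)
    rw [Nat.mul_comm, Nat.mul_add_div (hM (k+1)),
      Nat.div_eq_of_lt (hσ (k+1) x).1.1, Nat.add_zero]

lemma aux_cluster_param {X : Type*} [MetricSpace X] [CompactSpace X] [Nonempty X]
    [MeasurableSpace X] [BorelSpace X] (U : Ultrafilter ℕ)
    (ν : ℕ → Measure X) (hν : ∀ n, IsProbabilityMeasure (ν n))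
    (m M : ℕ → ℕ) (π : ℕ → X → ℕ)
    (hm0 : ∀ k, 0 < m k) (hM0 : ∀ k, 0 < M k) (hmrec : ∀ k, m (k+1) = m k * M (k+1))
    (hπlt : ∀ k x, π k x < m k)
    (hπmeas : ∀ k i, MeasurableSet (π k ⁻¹' {i}))
    (hπdist : ∀ k x y, π k x = π k y → dist x y ≤ (2⁻¹ : ℝ)^k / 2)
    (hπdiv : ∀ k x, π k x = π (k+1) x / M (k+1)) :
    ∃ μ : Measure X, IsProbabilityMeasure μ ∧
      ∀ f : X → ℝ, Continuous f →
        Tendsto (fun n => ∫ x, f x ∂(ν n)) ↑U (𝓝 (∫ x, f x ∂μ)) := by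
  classical
  -- ultrafilter limits in [0,1]
  have ulim : ∀ h : ℕ → ℝ, (∀ n, h n ∈ Icc (0:ℝ) 1) → ∃ L ∈ Icc (0:ℝ) 1,
      Tendsto h ↑U (𝓝 L) := by
    intro h hh
    have hle : ↑(U.map h) ≤ 𝓟 (Icc (0:ℝ) 1) := by
      rw [Ultrafilter.coe_map, le_principal_iff, mem_map]
      exact Filter.univ_mem' hh
    obtain ⟨L, hL, hL2⟩ := isCompact_Icc.ultrafilter_le_nhds (U.map h) hle
    exact ⟨L, hL, by rw [Ultrafilter.coe_map] at hL2; exact hL2⟩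
  -- masses of fibers
  set q : ℕ → ℕ → ℕ → ℝ := fun k i n => ((ν n) (π k ⁻¹' {i})).toReal with hqdef
  have hq01 : ∀ k i n, q k i n ∈ Icc (0:ℝ) 1 := by
    intro k i n
    haveI := hν n
    exact ⟨ENNReal.toReal_nonneg,
      ENNReal.toReal_le_of_le_ofReal zero_le_one (by simpa using prob_le_one)⟩
  have hcex : ∀ k i, ∃ L ∈ Icc (0:ℝ) 1, Tendsto (fun n => q k i n) ↑U (𝓝 L) :=
    fun k i => ulim _ (fun n => hq01 k i n)
  choose c hc01 hcT using hcex
  -- fiber partition facts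
  have hfibdisj : ∀ k, (↑(Finset.range (m k)) : Set ℕ).PairwiseDisjoint
      (fun i => π k ⁻¹' {i}) := by
    intro k i _ j _ hij
    exact Set.disjoint_left.mpr fun x hxi hxj => hij (by
      simp only [mem_preimage, mem_singleton_iff] at hxi hxj
      rw [← hxi, ← hxj])
  have hchdisj : ∀ k p, (↑(Finset.range (M (k+1))) : Set ℕ).PairwiseDisjoint
      (fun j => π (k+1) ⁻¹' {p * M (k+1) + j}) := by
    intro k p i _ j _ hij
    exact Set.disjoint_left.mpr fun x hxi hxj => hij (by
      simp only [mem_preimage, mem_singleton_iff] at hxi hxj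
      omega)
  have hfibunion : ∀ k, ⋃ i ∈ Finset.range (m k), π k ⁻¹' {i} = univ := by
    intro k
    ext x
    simp only [mem_iUnion, mem_preimage, mem_singleton_iff, Finset.mem_range, mem_univ, iff_true]
    exact ⟨π k x, hπlt k x, rfl⟩
  have hchild : ∀ k p, π k ⁻¹' {p} = ⋃ j ∈ Finset.range (M (k+1)),
      π (k+1) ⁻¹' {p * M (k+1) + j} := by
    intro k p
    ext x
    simp only [mem_iUnion, mem_preimage, mem_singleton_iff, Finset.mem_range]
    constructor
    · rintro rfl
      refine ⟨π (k+1) x % M (k+1), Nat.mod_lt _ (hM0 (k+1)), ?_⟩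
      rw [hπdiv k x, Nat.mul_comm]
      exact (Nat.div_add_mod _ _).symm
    · rintro ⟨j, hj, hx⟩
      rw [hπdiv k x, hx, Nat.mul_comm, Nat.mul_add_div (hM0 (k+1)),
        Nat.div_eq_of_lt hj, Nat.add_zero]
  -- mass identities for each n
  have hqsum1 : ∀ n k, ∑ i ∈ Finset.range (m k), q k i n = 1 := by
    intro n k
    haveI := hν n
    have h1 : (ν n) (⋃ i ∈ Finset.range (m k), π k ⁻¹' {i})
        = ∑ i ∈ Finset.range (m k), (ν n) (π k ⁻¹' {i}) :=
      measure_biUnion_finset (hfibdisj k) (fun i _ => hπmeas k i)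
    rw [hfibunion k, measure_univ] at h1
    have h2 := congrArg ENNReal.toReal h1
    rw [ENNReal.toReal_one, ENNReal.toReal_sum (fun i _ => measure_ne_top _ _)] at h2
    exact h2.symm
  have hqchild : ∀ n k p, q k p n = ∑ j ∈ Finset.range (M (k+1)), q (k+1) (p * M (k+1) + j) n := by
    intro n k p
    haveI := hν n
    have h1 : (ν n) (π k ⁻¹' {p}) = ∑ j ∈ Finset.range (M (k+1)),
        (ν n) (π (k+1) ⁻¹' {p * M (k+1) + j}) := by
      rw [hchild k p]
      exact measure_biUnion_finset (hchdisj k p) (fun j _ => hπmeas (k+1) _)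
    have h2 := congrArg ENNReal.toReal h1
    rwa [ENNReal.toReal_sum (fun i _ => measure_ne_top _ _)] at h2
  -- limit mass identities
  have hcsum1 : ∀ k, ∑ i ∈ Finset.range (m k), c k i = 1 := by
    intro k
    have h1 : Tendsto (fun n => ∑ i ∈ Finset.range (m k), q k i n) ↑U
        (𝓝 (∑ i ∈ Finset.range (m k), c k i)) :=
      tendsto_finset_sum _ (fun i _ => hcT k i)
    have h2 : Tendsto (fun n => ∑ i ∈ Finset.range (m k), q k i n) ↑U (𝓝 1) := by
      simpa only [hqsum1] using (tendsto_const_nhds : Tendsto (fun _ : ℕ => (1:ℝ)) ↑U (𝓝 1))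
    exact tendsto_nhds_unique h1 h2
  have hcchild : ∀ k p, c k p = ∑ j ∈ Finset.range (M (k+1)), c (k+1) (p * M (k+1) + j) := by
    intro k p
    have h1 : Tendsto (fun n => ∑ j ∈ Finset.range (M (k+1)), q (k+1) (p * M (k+1) + j) n) ↑U
        (𝓝 (∑ j ∈ Finset.range (M (k+1)), c (k+1) (p * M (k+1) + j))) :=
      tendsto_finset_sum _ (fun j _ => hcT (k+1) _)
    have h2 : Tendsto (fun n => ∑ j ∈ Finset.range (M (k+1)), q (k+1) (p * M (k+1) + j) n) ↑U
        (𝓝 (c k p)) := by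
      simpa only [← hqchild] using hcT k p
    exact tendsto_nhds_unique h2 h1
  have hcempty : ∀ k i, π k ⁻¹' {i} = ∅ → c k i = 0 := by
    intro k i h
    have h2 : Tendsto (fun n => q k i n) ↑U (𝓝 0) := by
      have : (fun n => q k i n) = fun _ => 0 := by
        funext n
        simp [hqdef, h]
      rw [this]
      exact tendsto_const_nhds
    exact tendsto_nhds_unique (hcT k i) h2
  -- cumulative sums
  set o : ℕ → ℕ → ℝ := fun k i => ∑ j ∈ Finset.range i, c k j with hodef
  have hc0 : ∀ k i, 0 ≤ c k i := fun k i => (hc01 k i).1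
  have ho0 : ∀ k, o k 0 = 0 := fun k => by simp [hodef]
  have hostep : ∀ k i, o k (i+1) = o k i + c k i := fun k i => Finset.sum_range_succ _ _
  have honneg : ∀ k i, 0 ≤ o k i := fun k i => Finset.sum_nonneg (fun j _ => hc0 k j)
  have homono : ∀ k, Monotone (o k) := by
    intro k a b hab
    exact Finset.sum_le_sum_of_subset_of_nonneg (Finset.range_subset_range.2 hab)
      (fun j _ _ => hc0 k j)
  have hotop : ∀ k i, m k ≤ i → o k i = 1 := by
    intro k i hi
    have hzero : ∀ j ∈ Finset.range i, j ∉ Finset.range (m k) → c k j = 0 := by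
      intro j _ hj
      rw [Finset.mem_range, not_lt] at hj
      refine hcempty k j ?_
      ext x
      simp only [mem_preimage, mem_singleton_iff, mem_empty_iff_false, iff_false]
      intro h
      exact absurd (h ▸ hπlt k x) (not_lt.mpr hj)
    rw [hodef]
    calc ∑ j ∈ Finset.range i, c k j = ∑ j ∈ Finset.range (m k), c k j :=
          (Finset.sum_subset (Finset.range_subset_range.2 hi) hzero).symm
      _ = 1 := hcsum1 k
  have hole1 : ∀ k i, o k i ≤ 1 := by
    intro k i
    rcases le_or_gt (m k) i with h | h
    · exact (hotop k i h).le
    · calc o k i ≤ o k (m k) := homono k h.le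
        _ = 1 := hotop k (m k) le_rfl
  have homul : ∀ k p, o (k+1) (p * M (k+1)) = o k p := by
    intro k p
    induction p with
    | zero => simp [ho0]
    | succ p ih =>
      have h1 : (p+1) * M (k+1) = p * M (k+1) + M (k+1) := by ring
      rw [h1]
      show (∑ j ∈ Finset.range (p * M (k+1) + M (k+1)), c (k+1) j) = o k (p+1)
      rw [Finset.sum_range_add (fun j => c (k+1) j) (p * M (k+1)) (M (k+1))]
      have : (∑ j ∈ Finset.range (p * M (k+1)), c (k+1) j) = o (k+1) (p * M (k+1)) := rfl
      rw [this, ih, hostep k p, ← hcchild k p]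
  -- the interval-decoding maps
  set G : ℕ → ℝ → ℕ := fun k y =>
    if h : ∃ i, y < o k (i+1) then Nat.find h else 0 with hGdef
  have hGex : ∀ k (y : ℝ), y < 1 → ∃ i, y < o k (i+1) :=
    fun k y hy => ⟨m k, by rw [hotop k (m k + 1) (Nat.le_succ _)]; exact hy⟩
  have hGval : ∀ k (y : ℝ) (h : ∃ i, y < o k (i+1)), G k y = Nat.find h := by
    intro k y h
    rw [hGdef]
    simp only [dif_pos h]
  have hGspec2 : ∀ k (y : ℝ), y < 1 → y < o k (G k y + 1) := by
    intro k y hy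
    rw [hGval k y (hGex k y hy)]
    exact Nat.find_spec (hGex k y hy)
  have hGmin : ∀ k (y : ℝ), y < 1 → ∀ j, j < G k y → o k (j+1) ≤ y := by
    intro k y hy j hj
    rw [hGval k y (hGex k y hy)] at hj
    exact not_lt.mp (Nat.find_min (hGex k y hy) hj)
  have hGspec1 : ∀ k (y : ℝ), y ∈ Ico (0:ℝ) 1 → o k (G k y) ≤ y := by
    intro k y hy
    rcases Nat.eq_zero_or_pos (G k y) with h | h
    · rw [h, ho0]; exact hy.1
    · obtain ⟨j, hj⟩ := Nat.exists_eq_succ_of_ne_zero (Nat.pos_iff_ne_zero.mp h)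
      rw [hj]
      exact hGmin k y hy.2 j (by omega)
  have hGuniq : ∀ k (y : ℝ) i, y ∈ Ico (0:ℝ) 1 → y < o k (i+1) →
      (∀ j, j < i → o k (j+1) ≤ y) → G k y = i := by
    intro k y i hy hup hmin
    rcases lt_trichotomy (G k y) i with h | h | h
    · exact absurd (hGspec2 k y hy.2) (not_lt.mpr (hmin _ h))
    · exact h
    · exact absurd hup (not_lt.mpr (hGmin k y hy.2 i h))
  have hGlt : ∀ k (y : ℝ), y ∈ Ico (0:ℝ) 1 → G k y < m k := by
    intro k y hy
    by_contra hcon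
    rw [not_lt] at hcon
    have h1 : m k - 1 < G k y := by have := hm0 k; omega
    have h2 := hGmin k y hy.2 _ h1
    have h3 : m k - 1 + 1 = m k := by have := hm0 k; omega
    rw [h3, hotop k (m k) le_rfl] at h2
    exact absurd hy.2 (not_lt.mpr h2)
  have hGfib : ∀ k i (y : ℝ), y ∈ Ico (o k i) (o k (i+1)) → y ∈ Ico (0:ℝ) 1 ∧ G k y = i := by
    intro k i y hy
    have hy01 : y ∈ Ico (0:ℝ) 1 :=
      ⟨le_trans (honneg k i) hy.1, lt_of_lt_of_le hy.2 (hole1 k (i+1))⟩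
    refine ⟨hy01, hGuniq k y i hy01 hy.2 (fun j hj => ?_)⟩
    calc o k (j+1) ≤ o k i := homono k (by omega)
      _ ≤ y := hy.1
  have hGdivM : ∀ k (y : ℝ), y ∈ Ico (0:ℝ) 1 → G k y = G (k+1) y / M (k+1) := by
    intro k y hy
    refine hGuniq k y _ hy ?_ ?_
    · have h1 : G (k+1) y + 1 ≤ (G (k+1) y / M (k+1) + 1) * M (k+1) := by
        have hdm := Nat.div_add_mod (G (k+1) y) (M (k+1))
        have hml := Nat.mod_lt (G (k+1) y) (hM0 (k+1))
        have hexp : (G (k+1) y / M (k+1) + 1) * M (k+1)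
            = M (k+1) * (G (k+1) y / M (k+1)) + M (k+1) := by ring
        omega
      calc y < o (k+1) (G (k+1) y + 1) := hGspec2 (k+1) y hy.2
        _ ≤ o (k+1) ((G (k+1) y / M (k+1) + 1) * M (k+1)) := homono (k+1) h1
        _ = o k (G (k+1) y / M (k+1) + 1) := homul k _
    · intro j hj
      have h2 : (j+1) * M (k+1) ≤ G (k+1) y := by
        have h3 : j + 1 ≤ G (k+1) y / M (k+1) := hj
        calc (j+1) * M (k+1) ≤ (G (k+1) y / M (k+1)) * M (k+1) :=
              Nat.mul_le_mul_right _ h3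
          _ ≤ G (k+1) y := Nat.div_mul_le_self _ _
      calc o k (j+1) = o (k+1) ((j+1) * M (k+1)) := (homul k _).symm
        _ ≤ o (k+1) (G (k+1) y) := homono (k+1) h2
        _ ≤ y := hGspec1 (k+1) y hy
  -- choice of points in fibers
  have hxiex : ∀ k i, ∃ p : X, (π k ⁻¹' {i}).Nonempty → π k p = i := by
    intro k i
    by_cases h : (π k ⁻¹' {i}).Nonempty
    · exact ⟨h.choose, fun _ => h.choose_spec⟩
    · exact ⟨Classical.arbitrary X, fun hh => absurd hh h⟩
  choose ξ hξ using hxiex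
  have hcposfib : ∀ k i, 0 < c k i → π k (ξ k i) = i := by
    intro k i hci
    refine hξ k i ?_
    rw [Set.nonempty_iff_ne_empty]
    intro hemp
    exact absurd (hcempty k i hemp) (by linarith)
  -- the approximating maps
  set gs : ℕ → ℝ → X := fun k y => ξ k (G k y) with hgsdef
  have hgsfib : ∀ k (y : ℝ), y ∈ Ico (0:ℝ) 1 → π k (gs k y) = G k y := by
    intro k y hy
    refine hcposfib k (G k y) ?_
    have h1 := hGspec1 k y hy
    have h2 := hGspec2 k y hy.2
    rw [hostep] at h2
    linarith
  have hgsdist : ∀ k (y : ℝ), y ∈ Ico (0:ℝ) 1 →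
      dist (gs k y) (gs (k+1) y) ≤ (2⁻¹:ℝ)^k / 2 := by
    intro k y hy
    refine hπdist k _ _ ?_
    rw [hgsfib k y hy, hπdiv k (gs (k+1) y), hgsfib (k+1) y hy, ← hGdivM k y hy]
  -- the limit map
  have hglim : ∀ y : ℝ, ∃ p : X, y ∈ Ico (0:ℝ) 1 →
      Tendsto (fun k => gs k y) atTop (𝓝 p) := by
    intro y
    by_cases hy : y ∈ Ico (0:ℝ) 1
    · have hc : CauchySeq (fun k => gs k y) := by
        refine cauchySeq_of_le_geometric 2⁻¹ (1/2 : ℝ) (by norm_num) (fun k => ?_)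
        calc dist (gs k y) (gs (k+1) y) ≤ (2⁻¹:ℝ)^k / 2 := hgsdist k y hy
          _ = 1/2 * 2⁻¹^k := by ring
      obtain ⟨p, hp⟩ := cauchySeq_tendsto_of_complete hc
      exact ⟨p, fun _ => hp⟩
    · exact ⟨Classical.arbitrary X, fun h => absurd h hy⟩
  choose g hg using hglim
  have hgdist : ∀ (y : ℝ), y ∈ Ico (0:ℝ) 1 → ∀ k, dist (gs k y) (g y) ≤ (2⁻¹:ℝ)^k := by
    intro y hy k
    have h1 : ∀ n : ℕ, dist (gs n y) (gs (n+1) y) ≤ (1/2 : ℝ) * 2⁻¹^n := by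
      intro n
      calc dist (gs n y) (gs (n+1) y) ≤ (2⁻¹:ℝ)^n / 2 := hgsdist n y hy
        _ = 1/2 * 2⁻¹^n := by ring
    have h2 := dist_le_of_le_geometric_of_tendsto 2⁻¹ (1/2 : ℝ) (by norm_num) h1 (hg y hy) k
    calc dist (gs k y) (g y) ≤ 1/2 * 2⁻¹^k / (1 - 2⁻¹) := h2
      _ = (2⁻¹:ℝ)^k := by norm_num
  -- measurability
  have hGmeas : ∀ k i, MeasurableSet (G k ⁻¹' {i}) := by
    intro k i
    have hfib : G k ⁻¹' {i} =
        ((Iio (1:ℝ) ∩ Iio (o k (i+1)) ∩ ⋂ j ∈ Finset.range i, Ici (o k (j+1)))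
          ∪ (if i = 0 then Ici (1:ℝ) else ∅)) := by
      ext y
      simp only [mem_preimage, mem_singleton_iff, mem_union, mem_inter_iff, mem_Iio,
        mem_iInter, mem_Ici, Finset.mem_range]
      constructor
      · intro hGy
        by_cases hy1 : y < 1
        · left
          rw [← hGy]
          exact ⟨⟨hy1, hGspec2 k y hy1⟩, fun j hj => hGmin k y hy1 j hj⟩
        · right
          have : G k y = 0 := by
            rw [hGdef]
            simp only
            rw [dif_neg]
            intro ⟨j, hjy⟩
            exact hy1 (lt_of_lt_of_le hjy (hole1 k (j+1)))
          rw [← hGy, this]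
          simp [not_lt.mp hy1]
      · rintro (⟨⟨hy1, hup⟩, hmin⟩ | hright)
        · by_cases hy0 : 0 ≤ y
          · exact hGuniq k y i ⟨hy0, hy1⟩ hup hmin
          · -- y < 0 : G k y = 0 and i must be 0, since all lower bounds o k (j+1) ≤ y fail
            have hi0 : i = 0 := by
              by_contra hne
              have := hmin 0 (Nat.pos_of_ne_zero hne)
              have h00 := honneg k 1
              linarith
            have hex : ∃ j, y < o k (j+1) := ⟨0, by have := honneg k 1; have := hc0 k 0; have h01 := hostep k 0; rw [ho0] at h01; linarith⟩
            rw [hi0, hGval k y hex, Nat.find_eq_zero]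
            have h01 := hostep k 0
            rw [ho0] at h01
            have := hc0 k 0
            linarith
        · split_ifs at hright with hi
          · subst hi
            rw [hGdef]
            simp only
            rw [dif_neg]
            intro ⟨j, hjy⟩
            rw [mem_Ici] at hright
            exact absurd hjy (not_lt.mpr (le_trans (hole1 k (j+1)) hright))
          · exact absurd hright (notMem_empty y)
    rw [hfib]
    refine MeasurableSet.union ?_ ?_
    · exact ((measurableSet_Iio.inter measurableSet_Iio).inter
        (MeasurableSet.biInter (Finset.range i).countable_toSet fun j _ => measurableSet_Ici))
    · split_ifs
      · exact measurableSet_Ici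
      · exact MeasurableSet.empty
  have hgsmeas : ∀ k, Measurable (gs k) := fun k =>
    measurable_from_top.comp (measurable_to_countable' (hGmeas k))
  have hgmeas : AEMeasurable g (volume.restrict (Ico (0:ℝ) 1)) := by
    refine aemeasurable_of_tendsto_metrizable_ae atTop (fun k => (hgsmeas k).aemeasurable) ?_
    rw [ae_restrict_iff' measurableSet_Ico]
    exact ae_of_all _ (fun y hy => hg y hy)
  haveI hvol1 : IsProbabilityMeasure (volume.restrict (Ico (0:ℝ) 1)) :=
    ⟨by rw [Measure.restrict_apply_univ, Real.volume_Ico]; norm_num⟩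
  refine ⟨(volume.restrict (Ico (0:ℝ) 1)).map g, Measure.isProbabilityMeasure_map hgmeas, ?_⟩
  intro f hf
  obtain ⟨x0, -, hx0⟩ := isCompact_univ.exists_isMaxOn univ_nonempty (hf.norm.continuousOn)
  have hCf : ∀ x : X, ‖f x‖ ≤ ‖f x0‖ := fun x => hx0 (mem_univ x)
  have hmap : ∫ x, f x ∂((volume.restrict (Ico (0:ℝ) 1)).map g)
      = ∫ y in Ico (0:ℝ) 1, f (g y) := integral_map hgmeas hf.aestronglyMeasurable
  rw [hmap, Metric.tendsto_nhds]
  intro ε hε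
  have huc := CompactSpace.uniformContinuous_of_continuous hf
  rw [Metric.uniformContinuous_iff] at huc
  obtain ⟨δ, hδ0, hδ⟩ := huc (ε/4) (by positivity)
  obtain ⟨k, hk⟩ : ∃ k : ℕ, (2⁻¹:ℝ)^k < δ := exists_pow_lt_of_lt_one hδ0 (by norm_num)
  set Ak : ℝ := ∑ i ∈ Finset.range (m k), c k i * f (ξ k i) with hAkdef
  set B : ℕ → ℝ := fun n => ∑ i ∈ Finset.range (m k), q k i n * f (ξ k i) with hBdef
  -- Claim 1 : |∫ f∘g - Ak| ≤ ε/4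
  have hIcoU : Ico (0:ℝ) 1 = ⋃ i ∈ Finset.range (m k), Ico (o k i) (o k (i+1)) := by
    ext y
    simp only [mem_iUnion, Finset.mem_range]
    constructor
    · intro hy
      exact ⟨G k y, hGlt k y hy, hGspec1 k y hy, hGspec2 k y hy.2⟩
    · rintro ⟨i, _, hyi⟩
      exact (hGfib k i y hyi).1
  have hIcokey : ∀ a b : ℕ, a < b →
      Disjoint (Ico (o k a) (o k (a+1))) (Ico (o k b) (o k (b+1))) := by
    intro a b hab
    rw [Set.Ico_disjoint_Ico]
    calc min (o k (a+1)) (o k (b+1)) ≤ o k (a+1) := min_le_left _ _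
      _ ≤ o k b := homono k hab
      _ ≤ max (o k a) (o k b) := le_max_right _ _
  have hIcodisj : (↑(Finset.range (m k)) : Set ℕ).Pairwise
      (Function.onFun Disjoint fun i => Ico (o k i) (o k (i+1))) := by
    intro i _ j _ hij
    rcases lt_or_gt_of_ne hij with h | h
    · exact hIcokey i j h
    · exact (hIcokey j i h).symm
  have hintgs : Integrable (fun y => f (gs k y)) (volume.restrict (Ico (0:ℝ) 1)) :=
    Integrable.mono' (integrable_const ‖f x0‖)
      ((hf.measurable.comp (hgsmeas k)).aestronglyMeasurable) (ae_of_all _ fun y => hCf _)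
  have hintg : Integrable (fun y => f (g y)) (volume.restrict (Ico (0:ℝ) 1)) :=
    Integrable.mono' (integrable_const ‖f x0‖)
      ((hf.measurable.comp_aemeasurable hgmeas).aestronglyMeasurable) (ae_of_all _ fun y => hCf _)
  have hpiece : ∀ i ∈ Finset.range (m k),
      ∫ y in Ico (o k i) (o k (i+1)), f (gs k y) = c k i * f (ξ k i) := by
    intro i _
    have hconst : EqOn (fun y => f (gs k y)) (fun _ => f (ξ k i)) (Ico (o k i) (o k (i+1))) := by
      intro y hy
      have h2 := hGfib k i y hy
      simp only [hgsdef]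
      rw [h2.2]
    have harg : o k (i+1) - o k i = c k i := by rw [hostep]; ring
    rw [setIntegral_congr_fun measurableSet_Ico hconst, setIntegral_const, measureReal_def, Real.volume_Ico,
      harg, ENNReal.toReal_ofReal (hc0 k i), smul_eq_mul]
  have hsum1 : ∫ y in Ico (0:ℝ) 1, f (gs k y) = Ak := by
    rw [hIcoU, integral_biUnion_finset (Finset.range (m k)) (fun i _ => measurableSet_Ico)
      hIcodisj (fun i hi => IntegrableOn.mono_set hintgs (fun y hy => (hGfib k i y hy).1))]
    exact Finset.sum_congr rfl hpiece
  have hclose1 : |(∫ y in Ico (0:ℝ) 1, f (g y)) - Ak| ≤ ε/4 := by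
    rw [← hsum1, ← integral_sub hintg hintgs]
    have hb := norm_setIntegral_le_of_norm_le_const (μ := volume) (s := Ico (0:ℝ) 1)
      (f := fun y => f (g y) - f (gs k y)) (C := ε/4) (by rw [Real.volume_Ico]; exact ENNReal.ofReal_lt_top) (fun y hy => ?_)
    · calc |∫ y in Ico (0:ℝ) 1, (f (g y) - f (gs k y))|
          = ‖∫ y in Ico (0:ℝ) 1, (f (g y) - f (gs k y))‖ := (Real.norm_eq_abs _).symm
        _ ≤ ε/4 * (volume (Ico (0:ℝ) 1)).toReal := hb
        _ = ε/4 := by rw [Real.volume_Ico]; norm_num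
    · have hd : dist (g y) (gs k y) < δ := by
        rw [dist_comm]
        exact lt_of_le_of_lt (hgdist y hy k) hk
      rw [← dist_eq_norm]
      exact (hδ hd).le
  -- Claim 2 : ∀ n, |∫ f dν n - B n| ≤ ε/4
  have hclose2 : ∀ n, |(∫ x, f x ∂(ν n)) - B n| ≤ ε/4 := by
    intro n
    haveI := hν n
    have hintf : Integrable f (ν n) := Integrable.mono' (integrable_const ‖f x0‖)
      hf.aestronglyMeasurable (ae_of_all _ hCf)
    have hdecomp : ∫ x, f x ∂ν n = ∑ i ∈ Finset.range (m k), ∫ x in π k ⁻¹' {i}, f x ∂ν n := by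
      conv_lhs => rw [← setIntegral_univ (f := f) (μ := ν n), ← hfibunion k]
      exact integral_biUnion_finset (Finset.range (m k)) (fun i _ => hπmeas k i)
        (hfibdisj k) (fun i _ => hintf.integrableOn)
    have hpieceB : ∀ i ∈ Finset.range (m k),
        |(∫ x in π k ⁻¹' {i}, f x ∂ν n) - q k i n * f (ξ k i)| ≤ ε/4 * q k i n := by
      intro i _
      have hconst : q k i n * f (ξ k i) = ∫ _ in π k ⁻¹' {i}, f (ξ k i) ∂ν n := by
        rw [setIntegral_const, smul_eq_mul]; rfl
      rw [hconst, ← integral_sub hintf.integrableOn (integrable_const _).integrableOn]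
      have hb := norm_setIntegral_le_of_norm_le_const (μ := ν n) (s := π k ⁻¹' {i})
        (f := fun x => f x - f (ξ k i)) (C := ε/4) (measure_lt_top _ _) (fun x hx => ?_)
      · calc |∫ x in π k ⁻¹' {i}, (f x - f (ξ k i)) ∂ν n|
            = ‖∫ x in π k ⁻¹' {i}, (f x - f (ξ k i)) ∂ν n‖ := (Real.norm_eq_abs _).symm
          _ ≤ ε/4 * ((ν n) (π k ⁻¹' {i})).toReal := hb
          _ = ε/4 * q k i n := rfl
      · have hne : (π k ⁻¹' {i}).Nonempty := ⟨x, hx⟩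
        have hπx : π k x = i := hx
        have hπξ : π k (ξ k i) = i := hξ k i hne
        have hd : dist x (ξ k i) < δ := by
          calc dist x (ξ k i) ≤ (2⁻¹:ℝ)^k / 2 := hπdist k _ _ (by rw [hπx, hπξ])
            _ < δ := by
              have h2 : (0:ℝ) < (2⁻¹:ℝ)^k := by positivity
              linarith
        rw [← dist_eq_norm]
        exact (hδ hd).le
    calc |(∫ x, f x ∂(ν n)) - B n|
        = |∑ i ∈ Finset.range (m k), ((∫ x in π k ⁻¹' {i}, f x ∂ν n) - q k i n * f (ξ k i))| := by
          rw [hdecomp, hBdef, Finset.sum_sub_distrib]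
      _ ≤ ∑ i ∈ Finset.range (m k),
            |(∫ x in π k ⁻¹' {i}, f x ∂ν n) - q k i n * f (ξ k i)| :=
          Finset.abs_sum_le_sum_abs _ _
      _ ≤ ∑ i ∈ Finset.range (m k), ε/4 * q k i n := Finset.sum_le_sum hpieceB
      _ = ε/4 := by rw [← Finset.mul_sum, hqsum1 n k, mul_one]
  -- Claim 3 and conclusion
  have hclaim3 : Tendsto B ↑U (𝓝 Ak) :=
    tendsto_finset_sum _ (fun i _ => (hcT k i).mul_const _)
  have hev := (Metric.tendsto_nhds.mp hclaim3) (ε/4) (by positivity)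
  filter_upwards [hev] with n hn
  rw [Real.dist_eq] at hn ⊢
  have h2 := hclose2 n
  calc |(∫ x, f x ∂(ν n)) - ∫ y in Ico (0:ℝ) 1, f (g y)|
      ≤ |(∫ x, f x ∂(ν n)) - B n| + |B n - ∫ y in Ico (0:ℝ) 1, f (g y)| := abs_sub_le _ _ _
    _ ≤ |(∫ x, f x ∂(ν n)) - B n| + (|B n - Ak| + |Ak - ∫ y in Ico (0:ℝ) 1, f (g y)|) := by
        have := abs_sub_le (B n) Ak (∫ y in Ico (0:ℝ) 1, f (g y))
        linarith
    _ < ε := by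
        have h3 : |Ak - ∫ y in Ico (0:ℝ) 1, f (g y)| ≤ ε/4 := by
          rw [abs_sub_comm]
          exact hclose1
        linarith

lemma aux_cluster {X : Type*} [MetricSpace X] [CompactSpace X] [Nonempty X]
    [MeasurableSpace X] [BorelSpace X] (U : Ultrafilter ℕ)
    (ν : ℕ → Measure X) (hν : ∀ n, IsProbabilityMeasure (ν n)) :
    ∃ μ : Measure X, IsProbabilityMeasure μ ∧
      ∀ f : X → ℝ, Continuous f →
        Tendsto (fun n => ∫ x, f x ∂(ν n)) ↑U (𝓝 (∫ x, f x ∂μ)) := by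
  obtain ⟨m, M, π, hm0, hM0, hmrec, hπlt, hπmeas, hπdist, hπdiv⟩ := aux_partition (X := X)
  exact aux_cluster_param U ν hν m M π hm0 hM0 hmrec hπlt hπmeas hπdist hπdiv


/-- If `T` is a metrizable Choquet simplex and `S ⊆ ∂ₑ(T)` is compact, then
`closure (conv S) = M_S`. -/
theorem stmt1 {E : Type*} [AddCommGroup E] [Module ℝ E] [TopologicalSpace E]
    [IsTopologicalAddGroup E] [ContinuousSMul ℝ E] [LocallyConvexSpace ℝ E] [T2Space E]
    [MeasurableSpace E] [BorelSpace E]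
    (T : Set E) (hTne : T.Nonempty) (hTcomp : IsCompact T) (hTconv : Convex ℝ T)
    (hTmetr : TopologicalSpace.MetrizableSpace T)
    (hChoquet : IsChoquetSimplex T)
    (S : Set E) (hS : S ⊆ T.extremePoints ℝ) (hScomp : IsCompact S) :
    closure (convexHull ℝ S) = MSet T S := by
  classical
  have hSsubT : S ⊆ T := fun x hx => (hS hx).1
  have hconvT : convexHull ℝ S ⊆ T := convexHull_min hSsubT hTconv
  have hclT : closure (convexHull ℝ S) ⊆ T := closure_minimal hconvT hTcomp.isClosed
  haveI := hTmetr
  haveI : TopologicalSpace.MetrizableSpace S :=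
    (Topology.IsEmbedding.inclusion hSsubT).metrizableSpace
  letI : MetricSpace S := TopologicalSpace.metrizableSpaceMetric S
  haveI : CompactSpace S := isCompact_iff_compactSpace.mp hScomp
  ext t
  constructor
  · -- closure (conv S) ⊆ MSet
    intro ht
    rcases S.eq_empty_or_nonempty with hSe | hSne
    · rw [hSe] at ht; simp at ht
    haveI : Nonempty S := hSne.to_subtype
    have htT : t ∈ T := hclT ht
    -- a sequence in conv S converging to t
    obtain ⟨u, hu, hulim⟩ : ∃ u : ℕ → E, (∀ n, u n ∈ convexHull ℝ S) ∧
        Tendsto u atTop (𝓝 t) := by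
      set t' : T := ⟨t, htT⟩
      have hcl' : t' ∈ closure (Subtype.val ⁻¹' (convexHull ℝ S) : Set T) := by
        rw [mem_closure_iff_nhds]
        intro V hV
        rw [nhds_subtype_eq_comap, mem_comap] at hV
        obtain ⟨W, hW, hWV⟩ := hV
        obtain ⟨v, hvW, hvconv⟩ := mem_closure_iff_nhds.mp ht W hW
        exact ⟨⟨v, hconvT hvconv⟩, hWV hvW, hvconv⟩
      obtain ⟨v, hv, hvlim⟩ := mem_closure_iff_seq_limit.mp hcl'
      exact ⟨fun n => (v n : E), hv,
        ((continuous_subtype_val.tendsto t').comp hvlim)⟩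
    choose ν hνprob hνint using fun n => aux_discrete (hu n)
    set U : Ultrafilter ℕ := Ultrafilter.of atTop
    obtain ⟨μX, hμXprob, hμXlim⟩ := aux_cluster U ν hνprob
    set μ : Measure E := μX.map (Subtype.val)
    have hmapmeas : Measurable (Subtype.val : S → E) := measurable_subtype_coe
    haveI := hμXprob
    refine ⟨htT, μ, Measure.isProbabilityMeasure_map hmapmeas.aemeasurable, ?_, ?_, ?_⟩
    · rw [Measure.map_apply hmapmeas hTcomp.isClosed.measurableSet.compl]
      have : (Subtype.val : S → E) ⁻¹' Tᶜ = ∅ := by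
        ext x; simp only [mem_preimage, mem_compl_iff, mem_empty_iff_false, iff_false, not_not]
        exact hSsubT x.2
      rw [this, measure_empty]
    · intro φ
      have hcont : Continuous (fun x : S => φ (x : E)) :=
        φ.continuous.comp continuous_subtype_val
      have h1 := hμXlim _ hcont
      have h2 : Tendsto (fun n => ∫ x : S, φ (x : E) ∂(ν n)) (↑U) (𝓝 (φ t)) := by
        have : Tendsto (fun n => φ (u n)) atTop (𝓝 (φ t)) :=
          (φ.continuous.tendsto t).comp hulim
        have := this.mono_left (Ultrafilter.of_le atTop)
        refine this.congr fun n => (hνint n φ).symm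
      have hφt : φ t = ∫ x : S, φ (x : E) ∂μX := tendsto_nhds_unique h2 h1
      rw [hφt, integral_map hmapmeas.aemeasurable φ.continuous.aestronglyMeasurable]
    · rw [Measure.map_apply hmapmeas
        ((hTcomp.isClosed.measurableSet).diff hScomp.isClosed.measurableSet)]
      have : (Subtype.val : S → E) ⁻¹' (T \ S) = ∅ := by
        ext x; simp only [mem_preimage, mem_diff, mem_empty_iff_false, iff_false]
        exact fun h => h.2 x.2
      rw [this, measure_empty]
  · -- MSet ⊆ closure (conv S)
    rintro ⟨htT, μ, hμprob, hμT, hμbar, hμTS⟩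
    by_contra hnot
    obtain ⟨φ, uu, hφt, hφgt⟩ := geometric_hahn_banach_point_closed
      ((convex_convexHull ℝ S).closure) isClosed_closure hnot
    have hμS : μ Sᶜ = 0 := by
      have hsub : Sᶜ ⊆ Tᶜ ∪ (T \ S) := by
        intro x hx
        by_cases hxT : x ∈ T
        · exact Or.inr ⟨hxT, hx⟩
        · exact Or.inl hxT
      exact measure_mono_null hsub (measure_union_null hμT hμTS)
    rcases S.eq_empty_or_nonempty with hSe | hSne
    · rw [hSe, compl_empty] at hμS
      exact (one_ne_zero (hμprob.measure_univ ▸ hμS)).elim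
    have hae : ∀ᵐ x ∂μ, x ∈ S := by
      rw [ae_iff]
      convert hμS using 2
      rfl
    obtain ⟨x0, _, hx0⟩ := IsCompact.exists_isMaxOn hScomp hSne (φ.continuous.norm.continuousOn)
    have hInt : Integrable (fun x => φ x) μ :=
      Integrable.mono' (integrable_const ‖φ x0‖) φ.continuous.aestronglyMeasurable
        (hae.mono fun x hx => hx0 hx)
    have hle : uu ≤ ∫ x, φ x ∂μ := by
      have hmono : ∀ᵐ x ∂μ, uu ≤ φ x :=
        hae.mono fun x hx => (hφgt _ (subset_closure (subset_convexHull ℝ S hx))).le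
      calc uu = ∫ _, uu ∂μ := by rw [integral_const, measureReal_def, hμprob.measure_univ]; simp
        _ ≤ ∫ x, φ x ∂μ := integral_mono_ae (integrable_const uu) hInt hmono
    rw [← hμbar φ] at hle
    linarith
end

section
/- Assume T is a metrizable Choquet simplex such that ∂_e(T) = Y ∪ Z with Y ∩ Z = ∅, Y and Z Borel, M_Y = closure(conv(Y)) and M_Z = closure(conv(Z)). Suppose α·y + (1−α)·z = α'·y' + (1−α')·z' where α, α' ∈ [0,1], y, y' ∈ M_Y and z, z' ∈ M_Z. Then α = α'; moreover, if α > 0 then y = y', and if α < 1 then z = z'. -/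
open MeasureTheory

/-- Continuous functions are integrable w.r.t. a finite measure concentrated on a compact set. -/
lemma integrable_aux_of_compact {E : Type*} [AddCommGroup E] [Module ℝ E] [TopologicalSpace E]
    [T2Space E] [MeasurableSpace E] [BorelSpace E] {T : Set E} (hTcomp : IsCompact T)
    (μ : Measure E) [IsFiniteMeasure μ] (hμT : μ Tᶜ = 0) (φ : E →L[ℝ] ℝ) :
    Integrable (fun x => φ x) μ := by
  have hres : μ.restrict T = μ :=
    Measure.restrict_eq_self_of_ae_mem (by rw [ae_iff]; exact hμT)
  rw [← hres]
  exact (φ.continuous.continuousOn).integrableOn_compact hTcomp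

/-- A convex combination of barycentric probability measures is a barycentric probability
measure for the corresponding convex combination of points. -/
lemma mix_aux {E : Type*} [AddCommGroup E] [Module ℝ E] [TopologicalSpace E]
    [T2Space E] [MeasurableSpace E] [BorelSpace E] {T : Set E} (hTcomp : IsCompact T)
    {β : ℝ} (hβ0 : 0 ≤ β) (hβ1 : β ≤ 1)
    {μ1 μ2 : Measure E} (h1p : IsProbabilityMeasure μ1) (h2p : IsProbabilityMeasure μ2)
    (h1T : μ1 Tᶜ = 0) (h2T : μ2 Tᶜ = 0)
    {y z : E} (h1b : IsBarycenter μ1 y) (h2b : IsBarycenter μ2 z)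
    {S1 S2 : Set E} (h1S : μ1 (T \ S1) = 0) (h2S : μ2 (T \ S2) = 0) :
    IsProbabilityMeasure (ENNReal.ofReal β • μ1 + ENNReal.ofReal (1 - β) • μ2) ∧
    (ENNReal.ofReal β • μ1 + ENNReal.ofReal (1 - β) • μ2) Tᶜ = 0 ∧
    IsBarycenter (ENNReal.ofReal β • μ1 + ENNReal.ofReal (1 - β) • μ2) (β • y + (1 - β) • z) ∧
    (ENNReal.ofReal β • μ1 + ENNReal.ofReal (1 - β) • μ2) (T \ (S1 ∪ S2)) = 0 := by
  have hβ1' : (0:ℝ) ≤ 1 - β := by linarith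
  refine ⟨⟨?_⟩, ?_, ?_, ?_⟩
  · simp only [Measure.add_apply, Measure.smul_apply, measure_univ, smul_eq_mul, mul_one]
    rw [← ENNReal.ofReal_add hβ0 hβ1']
    norm_num
  · simp [Measure.add_apply, Measure.smul_apply, h1T, h2T]
  · intro φ
    have i1 := integrable_aux_of_compact hTcomp μ1 h1T φ
    have i2 := integrable_aux_of_compact hTcomp μ2 h2T φ
    rw [integral_add_measure (i1.smul_measure ENNReal.ofReal_ne_top)
        (i2.smul_measure ENNReal.ofReal_ne_top),
      integral_smul_measure, integral_smul_measure,
      ENNReal.toReal_ofReal hβ0, ENNReal.toReal_ofReal hβ1']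
    rw [map_add, _root_.map_smul, _root_.map_smul]
    rw [h1b φ, h2b φ]
  · have hsub1 : T \ (S1 ∪ S2) ⊆ T \ S1 := Set.diff_subset_diff_right Set.subset_union_left
    have e1 : μ1 (T \ (S1 ∪ S2)) = 0 := measure_mono_null hsub1 h1S
    have hsub2 : T \ (S1 ∪ S2) ⊆ T \ S2 := Set.diff_subset_diff_right Set.subset_union_right
    have e2 : μ2 (T \ (S1 ∪ S2)) = 0 := measure_mono_null hsub2 h2S
    simp [Measure.add_apply, Measure.smul_apply, e1, e2]

/-- Uniqueness of the decomposition `t = α•y + (1-α)•z` with `y ∈ M_Y`, `z ∈ M_Z`, for a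
metrizable Choquet simplex `T` with `∂ₑ(T) = Y ∪ Z`, `Y ∩ Z = ∅`, `Y, Z` Borel,
`M_Y = closure (conv Y)` and `M_Z = closure (conv Z)`. -/
theorem stmt3 {E : Type*} [AddCommGroup E] [Module ℝ E] [TopologicalSpace E]
    [IsTopologicalAddGroup E] [ContinuousSMul ℝ E] [LocallyConvexSpace ℝ E] [T2Space E]
    [MeasurableSpace E] [BorelSpace E]
    (T : Set E) (hTne : T.Nonempty) (hTcomp : IsCompact T) (hTconv : Convex ℝ T)
    (hTmetr : TopologicalSpace.MetrizableSpace T)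
    (hChoquet : IsChoquetSimplex T)
    (Y Z : Set E) (hYZ : T.extremePoints ℝ = Y ∪ Z) (hdisj : Y ∩ Z = ∅)
    (hYborel : MeasurableSet Y) (hZborel : MeasurableSet Z)
    (hMY : MSet T Y = closure (convexHull ℝ Y))
    (hMZ : MSet T Z = closure (convexHull ℝ Z))
    (α α' : ℝ) (hα : α ∈ Set.Icc (0 : ℝ) 1) (hα' : α' ∈ Set.Icc (0 : ℝ) 1)
    (y y' : E) (hy : y ∈ MSet T Y) (hy' : y' ∈ MSet T Y)
    (z z' : E) (hz : z ∈ MSet T Z) (hz' : z' ∈ MSet T Z)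
    (heq : α • y + (1 - α) • z = α' • y' + (1 - α') • z') :
    α = α' ∧ (0 < α → y = y') ∧ (α < 1 → z = z') := by
  obtain ⟨hα0, hα1⟩ := hα
  obtain ⟨hα'0, hα'1⟩ := hα'
  obtain ⟨hyT, μ1, hμ1p, hμ1T, hμ1b, hμ1Y⟩ := hy
  obtain ⟨hy'T, μ1', hμ1'p, hμ1'T, hμ1'b, hμ1'Y⟩ := hy'
  obtain ⟨hzT, μ2, hμ2p, hμ2T, hμ2b, hμ2Z⟩ := hz
  obtain ⟨hz'T, μ2', hμ2'p, hμ2'T, hμ2'b, hμ2'Z⟩ := hz'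
  -- the two mixture measures
  set ν : Measure E := ENNReal.ofReal α • μ1 + ENNReal.ofReal (1 - α) • μ2 with hν
  set ν' : Measure E := ENNReal.ofReal α' • μ1' + ENNReal.ofReal (1 - α') • μ2' with hν'
  obtain ⟨hνp, hνT, hνb, hνS⟩ :=
    mix_aux hTcomp hα0 hα1 hμ1p hμ2p hμ1T hμ2T hμ1b hμ2b hμ1Y hμ2Z
  obtain ⟨hν'p, hν'T, hν'b, hν'S⟩ :=
    mix_aux hTcomp hα'0 hα'1 hμ1'p hμ2'p hμ1'T hμ2'T hμ1'b hμ2'b hμ1'Y hμ2'Z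
  have htT : α • y + (1 - α) • z ∈ T := hTconv hyT hzT hα0 (by linarith) (by linarith)
  -- Choquet uniqueness gives ν = ν'
  have hSrw : T \ (Y ∪ Z) = T \ T.extremePoints ℝ := by rw [hYZ]
  obtain ⟨μ0, _, huniq⟩ := hChoquet _ htT
  have hνν' : ν = ν' := by
    have e1 : ν = μ0 := huniq ν ⟨hνp, hνT, hνb, by rwa [← hSrw]⟩
    have e2 : ν' = μ0 := by
      refine huniq ν' ⟨hν'p, hν'T, ?_, by rwa [← hSrw]⟩
      rwa [heq]
    rw [e1, e2]
  -- the measures of `Y` and `Z`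
  have hYc1 : μ1 Yᶜ = 0 := by
    refine measure_mono_null (fun x hx => ?_) (measure_union_null hμ1T hμ1Y)
    by_cases h : x ∈ T
    · exact Or.inr ⟨h, hx⟩
    · exact Or.inl h
  have hYc1' : μ1' Yᶜ = 0 := by
    refine measure_mono_null (fun x hx => ?_) (measure_union_null hμ1'T hμ1'Y)
    by_cases h : x ∈ T
    · exact Or.inr ⟨h, hx⟩
    · exact Or.inl h
  have hZc2 : μ2 Zᶜ = 0 := by
    refine measure_mono_null (fun x hx => ?_) (measure_union_null hμ2T hμ2Z)
    by_cases h : x ∈ T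
    · exact Or.inr ⟨h, hx⟩
    · exact Or.inl h
  have hZc2' : μ2' Zᶜ = 0 := by
    refine measure_mono_null (fun x hx => ?_) (measure_union_null hμ2'T hμ2'Z)
    by_cases h : x ∈ T
    · exact Or.inr ⟨h, hx⟩
    · exact Or.inl h
  have hY1 : μ1 Y = 1 := (prob_compl_eq_zero_iff hYborel).mp hYc1
  have hY1' : μ1' Y = 1 := (prob_compl_eq_zero_iff hYborel).mp hYc1'
  have hZ2 : μ2 Z = 1 := (prob_compl_eq_zero_iff hZborel).mp hZc2
  have hZ2' : μ2' Z = 1 := (prob_compl_eq_zero_iff hZborel).mp hZc2'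
  have hY2 : μ2 Y = 0 := by
    refine measure_mono_null (fun x hx => ?_) hZc2
    intro hxZ
    exact absurd (Set.mem_inter hx hxZ) (by simp [hdisj])
  have hY2' : μ2' Y = 0 := by
    refine measure_mono_null (fun x hx => ?_) hZc2'
    intro hxZ
    exact absurd (Set.mem_inter hx hxZ) (by simp [hdisj])
  have hZ1 : μ1 Z = 0 := by
    refine measure_mono_null (fun x hx => ?_) hYc1
    intro hxY
    exact absurd (Set.mem_inter hxY hx) (by simp [hdisj])
  have hZ1' : μ1' Z = 0 := by
    refine measure_mono_null (fun x hx => ?_) hYc1'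
    intro hxY
    exact absurd (Set.mem_inter hxY hx) (by simp [hdisj])
  -- α = α'
  have hνY : ν Y = ENNReal.ofReal α := by
    simp [hν, Measure.add_apply, Measure.smul_apply, hY1, hY2]
  have hν'Y : ν' Y = ENNReal.ofReal α' := by
    simp [hν', Measure.add_apply, Measure.smul_apply, hY1', hY2']
  have hαα' : α = α' := by
    have : ENNReal.ofReal α = ENNReal.ofReal α' := by rw [← hνY, ← hν'Y, hνν']
    exact (ENNReal.ofReal_eq_ofReal_iff hα0 hα'0).mp this
  refine ⟨hαα', ?_, ?_⟩
  · -- if α > 0 then y = y'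
    intro hpos
    have ha0 : ENNReal.ofReal α ≠ 0 := by
      simp [ENNReal.ofReal_eq_zero, not_le, hpos]
    have hr1 : μ1.restrict Y = μ1 :=
      Measure.restrict_eq_self_of_ae_mem (by rw [ae_iff]; exact hYc1)
    have hr1' : μ1'.restrict Y = μ1' :=
      Measure.restrict_eq_self_of_ae_mem (by rw [ae_iff]; exact hYc1')
    have hresν : ν.restrict Y = ENNReal.ofReal α • μ1 := by
      rw [hν, Measure.restrict_add, Measure.restrict_smul, Measure.restrict_smul,
        Measure.restrict_eq_zero.mpr hY2, hr1, smul_zero, add_zero]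
    have hresν' : ν'.restrict Y = ENNReal.ofReal α • μ1' := by
      rw [hν', Measure.restrict_add, Measure.restrict_smul, Measure.restrict_smul,
        Measure.restrict_eq_zero.mpr hY2', hr1', smul_zero, add_zero, ← hαα']
    have hsmul : ENNReal.ofReal α • μ1 = ENNReal.ofReal α • μ1' := by
      rw [← hresν, ← hresν', hνν']
    have hμ1eq : μ1 = μ1' := by
      ext s hs
      have h := congrArg (fun m : Measure E => m s) hsmul
      simp only [Measure.smul_apply, smul_eq_mul] at h
      have hb : μ1 s = (ENNReal.ofReal α)⁻¹ * (ENNReal.ofReal α * μ1 s) := by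
        rw [← mul_assoc, ENNReal.inv_mul_cancel ha0 ENNReal.ofReal_ne_top, one_mul]
      rw [hb, h, ← mul_assoc, ENNReal.inv_mul_cancel ha0 ENNReal.ofReal_ne_top, one_mul]
    by_contra hne
    obtain ⟨φ, hφ⟩ := geometric_hahn_banach_point_point hne
    have : φ y = φ y' := by rw [hμ1b φ, hμ1'b φ, hμ1eq]
    exact absurd hφ (by simp [this])
  · -- if α < 1 then z = z'
    intro hlt
    have ha0 : ENNReal.ofReal (1 - α) ≠ 0 := by
      simp only [ne_eq, ENNReal.ofReal_eq_zero, not_le]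
      linarith
    have hr2 : μ2.restrict Z = μ2 :=
      Measure.restrict_eq_self_of_ae_mem (by rw [ae_iff]; exact hZc2)
    have hr2' : μ2'.restrict Z = μ2' :=
      Measure.restrict_eq_self_of_ae_mem (by rw [ae_iff]; exact hZc2')
    have hresν : ν.restrict Z = ENNReal.ofReal (1 - α) • μ2 := by
      rw [hν, Measure.restrict_add, Measure.restrict_smul, Measure.restrict_smul,
        Measure.restrict_eq_zero.mpr hZ1, hr2, smul_zero, zero_add]
    have hresν' : ν'.restrict Z = ENNReal.ofReal (1 - α) • μ2' := by
      rw [hν', Measure.restrict_add, Measure.restrict_smul, Measure.restrict_smul,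
        Measure.restrict_eq_zero.mpr hZ1', hr2', smul_zero, zero_add, ← hαα']
    have hsmul : ENNReal.ofReal (1 - α) • μ2 = ENNReal.ofReal (1 - α) • μ2' := by
      rw [← hresν, ← hresν', hνν']
    have hμ2eq : μ2 = μ2' := by
      ext s hs
      have h := congrArg (fun m : Measure E => m s) hsmul
      simp only [Measure.smul_apply, smul_eq_mul] at h
      have hb : μ2 s = (ENNReal.ofReal (1 - α))⁻¹ * (ENNReal.ofReal (1 - α) * μ2 s) := by
        rw [← mul_assoc, ENNReal.inv_mul_cancel ha0 ENNReal.ofReal_ne_top, one_mul]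
      rw [hb, h, ← mul_assoc, ENNReal.inv_mul_cancel ha0 ENNReal.ofReal_ne_top, one_mul]
    by_contra hne
    obtain ⟨φ, hφ⟩ := geometric_hahn_banach_point_point hne
    have : φ z = φ z' := by rw [hμ2b φ, hμ2'b φ, hμ2eq]
    exact absurd hφ (by simp [this])
end

section
/- Assume T is a metrizable Choquet simplex such that ∂_e(T) = Y ∪ Z with Y ∩ Z = ∅, Y and Z Borel, M_Y = closure(conv(Y)) and M_Z = closure(conv(Z)). Suppose x_n = α_n·y_n + (1−α_n)·z_n ∈ T with α_n ∈ [0,1], y_n ∈ M_Y and z_n ∈ M_Z for each n ∈ ℕ, and x_n → α·y + (1−α)·z where α ∈ [0,1], y ∈ M_Y and z ∈ M_Z. Then α_n → α; moreover y_n → y provided α > 0, and z_n → z provided α < 1 (in the degenerate cases α = 0, resp. α = 1, the component y, resp. z, is not uniquely determined by the limit). -/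
open MeasureTheory

open Filter Topology

section Aux

variable {E : Type*} [AddCommGroup E] [Module ℝ E] [TopologicalSpace E]
    [MeasurableSpace E] [BorelSpace E] [T2Space E]

lemma conc_compl {T S : Set E} {μ : Measure E} (hT : μ Tᶜ = 0) (hS : μ (T \ S) = 0) :
    μ Sᶜ = 0 := by
  refine measure_mono_null (fun x hx => ?_) (measure_union_null hT hS)
  by_cases h : x ∈ T
  · exact Or.inr ⟨h, hx⟩
  · exact Or.inl h

lemma conc_full {S : Set E} {μ : Measure E} [IsProbabilityMeasure μ]
    (hS : MeasurableSet S) (h : μ Sᶜ = 0) : μ S = 1 := by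
  have := measure_add_measure_compl (μ := μ) hS
  rwa [h, add_zero, measure_univ] at this

lemma integrable_of_conc {T : Set E} (hTcomp : IsCompact T) {μ : Measure E}
    [IsProbabilityMeasure μ] (hT : μ Tᶜ = 0) (φ : E →L[ℝ] ℝ) :
    Integrable (fun x => φ x) μ := by
  have h1 : IntegrableOn (fun x => φ x) T μ :=
    (φ.continuous.continuousOn).integrableOn_compact' hTcomp hTcomp.measurableSet
  have h2 : μ.restrict T = μ := by
    refine Measure.restrict_eq_self_of_ae_mem ?_
    rw [ae_iff]
    simpa [Set.compl_def] using hT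
  rwa [IntegrableOn, h2] at h1

lemma barycenter_comb {T : Set E} (hTcomp : IsCompact T) {a : ℝ} (ha0 : 0 ≤ a) (ha1 : a ≤ 1)
    {y z : E} {μ₁ μ₂ : Measure E} [IsProbabilityMeasure μ₁] [IsProbabilityMeasure μ₂]
    (h₁T : μ₁ Tᶜ = 0) (h₂T : μ₂ Tᶜ = 0)
    (hb₁ : IsBarycenter μ₁ y) (hb₂ : IsBarycenter μ₂ z) :
    IsBarycenter (ENNReal.ofReal a • μ₁ + ENNReal.ofReal (1 - a) • μ₂)
      (a • y + (1 - a) • z) := by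
  intro φ
  have int1 := integrable_of_conc hTcomp h₁T φ
  have int2 := integrable_of_conc hTcomp h₂T φ
  rw [integral_add_measure (int1.smul_measure ENNReal.ofReal_ne_top)
    (int2.smul_measure ENNReal.ofReal_ne_top), integral_smul_measure, integral_smul_measure,
    ENNReal.toReal_ofReal ha0, ENNReal.toReal_ofReal (by linarith), ← hb₁ φ, ← hb₂ φ]
  simp [smul_eq_mul]

end Aux


section Uniq

set_option linter.unusedSectionVars false

variable {E : Type*} [AddCommGroup E] [Module ℝ E] [TopologicalSpace E]
    [IsTopologicalAddGroup E] [ContinuousSMul ℝ E] [LocallyConvexSpace ℝ E] [T2Space E]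
    [MeasurableSpace E] [BorelSpace E]

lemma uniq_decomp {T Y Z : Set E} (hTcomp : IsCompact T) (hTconv : Convex ℝ T)
    (hChoquet : IsChoquetSimplex T)
    (hYZ : T.extremePoints ℝ = Y ∪ Z) (hdisj : Y ∩ Z = ∅)
    (hYborel : MeasurableSet Y) (hZborel : MeasurableSet Z)
    {a b : ℝ} (ha : a ∈ Set.Icc (0:ℝ) 1) (hb : b ∈ Set.Icc (0:ℝ) 1)
    {y₁ y₂ z₁ z₂ : E} (hy₁ : y₁ ∈ MSet T Y) (hy₂ : y₂ ∈ MSet T Y)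
    (hz₁ : z₁ ∈ MSet T Z) (hz₂ : z₂ ∈ MSet T Z)
    (heq : a • y₁ + (1 - a) • z₁ = b • y₂ + (1 - b) • z₂) :
    a = b ∧ (0 < a → y₁ = y₂) ∧ (a < 1 → z₁ = z₂) := by
  obtain ⟨hy₁T, μy₁, hpy₁, hTy₁, hby₁, hcy₁⟩ := hy₁
  obtain ⟨hy₂T, μy₂, hpy₂, hTy₂, hby₂, hcy₂⟩ := hy₂
  obtain ⟨hz₁T, μz₁, hpz₁, hTz₁, hbz₁, hcz₁⟩ := hz₁
  obtain ⟨hz₂T, μz₂, hpz₂, hTz₂, hbz₂, hcz₂⟩ := hz₂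
  obtain ⟨ha0, ha1⟩ := ha
  obtain ⟨hb0, hb1⟩ := hb
  set ν₁ : Measure E := ENNReal.ofReal a • μy₁ + ENNReal.ofReal (1 - a) • μz₁ with hν₁
  set ν₂ : Measure E := ENNReal.ofReal b • μy₂ + ENNReal.ofReal (1 - b) • μz₂ with hν₂
  -- measure of a set under a combination
  have happ : ∀ (c : ℝ) (μ μ' : Measure E) (s : Set E),
      (ENNReal.ofReal c • μ + ENNReal.ofReal (1 - c) • μ') s =
        ENNReal.ofReal c * μ s + ENNReal.ofReal (1 - c) * μ' s := by
    intro c μ μ' s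
    rw [Measure.add_apply, Measure.smul_apply, Measure.smul_apply, smul_eq_mul, smul_eq_mul]
  haveI hP₁ : IsProbabilityMeasure ν₁ := by
    constructor
    rw [hν₁, happ, hpy₁.measure_univ, hpz₁.measure_univ, mul_one, mul_one,
      ← ENNReal.ofReal_add ha0 (by linarith), show a + (1 - a) = 1 by ring, ENNReal.ofReal_one]
  haveI hP₂ : IsProbabilityMeasure ν₂ := by
    constructor
    rw [hν₂, happ, hpy₂.measure_univ, hpz₂.measure_univ, mul_one, mul_one,
      ← ENNReal.ofReal_add hb0 (by linarith), show b + (1 - b) = 1 by ring, ENNReal.ofReal_one]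
  have hzero : ∀ (c : ℝ) (μ μ' : Measure E) (s : Set E), μ s = 0 → μ' s = 0 →
      (ENNReal.ofReal c • μ + ENNReal.ofReal (1 - c) • μ') s = 0 := by
    intro c μ μ' s h h'
    rw [happ, h, h', mul_zero, mul_zero, add_zero]
  have hxT : a • y₁ + (1 - a) • z₁ ∈ T := hTconv hy₁T hz₁T ha0 (by linarith) (by ring)
  have hE₁ : ν₁ (T \ T.extremePoints ℝ) = 0 := by
    rw [hYZ]
    exact hzero a _ _ _
      (measure_mono_null (Set.diff_subset_diff_right Set.subset_union_left) hcy₁)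
      (measure_mono_null (Set.diff_subset_diff_right Set.subset_union_right) hcz₁)
  have hE₂ : ν₂ (T \ T.extremePoints ℝ) = 0 := by
    rw [hYZ]
    exact hzero b _ _ _
      (measure_mono_null (Set.diff_subset_diff_right Set.subset_union_left) hcy₂)
      (measure_mono_null (Set.diff_subset_diff_right Set.subset_union_right) hcz₂)
  have hT₁ : ν₁ Tᶜ = 0 := hzero a _ _ _ hTy₁ hTz₁
  have hT₂ : ν₂ Tᶜ = 0 := hzero b _ _ _ hTy₂ hTz₂
  have hB₁ : IsBarycenter ν₁ (a • y₁ + (1 - a) • z₁) :=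
    barycenter_comb hTcomp ha0 ha1 hTy₁ hTz₁ hby₁ hbz₁
  have hB₂ : IsBarycenter ν₂ (a • y₁ + (1 - a) • z₁) :=
    heq ▸ barycenter_comb hTcomp hb0 hb1 hTy₂ hTz₂ hby₂ hbz₂
  obtain ⟨μ, _, huniq⟩ := hChoquet _ hxT
  have hνeq : ν₁ = ν₂ :=
    (huniq ν₁ ⟨hP₁, hT₁, hB₁, hE₁⟩).trans (huniq ν₂ ⟨hP₂, hT₂, hB₂, hE₂⟩).symm
  -- concentration facts
  have hYZc : Y ⊆ Zᶜ := fun x hx hxZ =>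
    (Set.eq_empty_iff_forall_notMem.mp hdisj x) ⟨hx, hxZ⟩
  have hZYc : Z ⊆ Yᶜ := fun x hx hxY =>
    (Set.eq_empty_iff_forall_notMem.mp hdisj x) ⟨hxY, hx⟩
  have hz₁Y : μz₁ Y = 0 := measure_mono_null hYZc (conc_compl hTz₁ hcz₁)
  have hz₂Y : μz₂ Y = 0 := measure_mono_null hYZc (conc_compl hTz₂ hcz₂)
  have hy₁Z : μy₁ Z = 0 := measure_mono_null hZYc (conc_compl hTy₁ hcy₁)
  have hy₂Z : μy₂ Z = 0 := measure_mono_null hZYc (conc_compl hTy₂ hcy₂)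
  have hy₁Y : μy₁ Y = 1 := conc_full hYborel (conc_compl hTy₁ hcy₁)
  have hy₂Y : μy₂ Y = 1 := conc_full hYborel (conc_compl hTy₂ hcy₂)
  have hz₁Z : μz₁ Z = 1 := conc_full hZborel (conc_compl hTz₁ hcz₁)
  have hz₂Z : μz₂ Z = 1 := conc_full hZborel (conc_compl hTz₂ hcz₂)
  -- a = b
  have hab : a = b := by
    have h := congrArg (fun m : Measure E => m Y) hνeq
    simp only [hν₁, hν₂, happ, hy₁Y, hy₂Y, hz₁Y, hz₂Y, mul_one, mul_zero, add_zero] at h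
    exact (ENNReal.ofReal_eq_ofReal_iff ha0 hb0).mp h
  refine ⟨hab, ?_, ?_⟩
  · -- y₁ = y₂ when 0 < a
    intro hapos
    have hcne : ENNReal.ofReal a ≠ 0 := by
      simp only [ne_eq, ENNReal.ofReal_eq_zero, not_le]; exact hapos
    have hμeq : μy₁ = μy₂ := by
      ext s hs
      have h := congrArg (fun m : Measure E => m (s ∩ Y)) hνeq
      simp only [hν₁, hν₂, happ, ← hab,
        measure_mono_null Set.inter_subset_right hz₁Y,
        measure_mono_null Set.inter_subset_right hz₂Y, mul_zero, add_zero] at h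
      have hc := (ENNReal.mul_right_inj hcne ENNReal.ofReal_ne_top).mp h
      have e₁ : μy₁ (s ∩ Y) + μy₁ (s \ Y) = μy₁ s := measure_inter_add_diff s hYborel
      have e₂ : μy₂ (s ∩ Y) + μy₂ (s \ Y) = μy₂ s := measure_inter_add_diff s hYborel
      have d₁ : μy₁ (s \ Y) = 0 :=
        measure_mono_null (fun x hx => hx.2) (conc_compl hTy₁ hcy₁)
      have d₂ : μy₂ (s \ Y) = 0 :=
        measure_mono_null (fun x hx => hx.2) (conc_compl hTy₂ hcy₂)
      rw [d₁, add_zero] at e₁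
      rw [d₂, add_zero] at e₂
      rw [← e₁, ← e₂, hc]
    by_contra hne
    obtain ⟨φ, hφ⟩ := SeparatingDual.exists_separating_of_ne (R := ℝ) hne
    exact hφ (by rw [hby₁ φ, hby₂ φ, hμeq])
  · -- z₁ = z₂ when a < 1
    intro halt
    have hcne : ENNReal.ofReal (1 - a) ≠ 0 := by
      simp only [ne_eq, ENNReal.ofReal_eq_zero, not_le]; linarith
    have hμeq : μz₁ = μz₂ := by
      ext s hs
      have h := congrArg (fun m : Measure E => m (s ∩ Z)) hνeq
      simp only [hν₁, hν₂, happ, ← hab,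
        measure_mono_null Set.inter_subset_right hy₁Z,
        measure_mono_null Set.inter_subset_right hy₂Z, mul_zero, zero_add] at h
      have hc := (ENNReal.mul_right_inj hcne ENNReal.ofReal_ne_top).mp h
      have e₁ : μz₁ (s ∩ Z) + μz₁ (s \ Z) = μz₁ s := measure_inter_add_diff s hZborel
      have e₂ : μz₂ (s ∩ Z) + μz₂ (s \ Z) = μz₂ s := measure_inter_add_diff s hZborel
      have d₁ : μz₁ (s \ Z) = 0 :=
        measure_mono_null (fun x hx => hx.2) (conc_compl hTz₁ hcz₁)
      have d₂ : μz₂ (s \ Z) = 0 :=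
        measure_mono_null (fun x hx => hx.2) (conc_compl hTz₂ hcz₂)
      rw [d₁, add_zero] at e₁
      rw [d₂, add_zero] at e₂
      rw [← e₁, ← e₂, hc]
    by_contra hne
    obtain ⟨φ, hφ⟩ := SeparatingDual.exists_separating_of_ne (R := ℝ) hne
    exact hφ (by rw [hbz₁ φ, hbz₂ φ, hμeq])

end Uniq

/-- Lemma 2.4 of the paper: continuity of the decomposition along the splitting
`∂ₑ(T) = Y ∪ Z` of the extreme boundary of a metrizable Choquet simplex. -/
theorem stmt4 {E : Type*} [AddCommGroup E] [Module ℝ E] [TopologicalSpace E]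
    [IsTopologicalAddGroup E] [ContinuousSMul ℝ E] [LocallyConvexSpace ℝ E] [T2Space E]
    [MeasurableSpace E] [BorelSpace E]
    (T : Set E) (hTne : T.Nonempty) (hTcomp : IsCompact T) (hTconv : Convex ℝ T)
    (hTmetr : TopologicalSpace.MetrizableSpace T)
    (hChoquet : IsChoquetSimplex T)
    (Y Z : Set E) (hYZ : T.extremePoints ℝ = Y ∪ Z) (hdisj : Y ∩ Z = ∅)
    (hYborel : MeasurableSet Y) (hZborel : MeasurableSet Z)
    (hMY : MSet T Y = closure (convexHull ℝ Y))
    (hMZ : MSet T Z = closure (convexHull ℝ Z))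
    (α : ℕ → ℝ) (hα : ∀ n, α n ∈ Set.Icc (0 : ℝ) 1)
    (y : ℕ → E) (hy : ∀ n, y n ∈ MSet T Y)
    (z : ℕ → E) (hz : ∀ n, z n ∈ MSet T Z)
    (α₀ : ℝ) (hα₀ : α₀ ∈ Set.Icc (0 : ℝ) 1)
    (y₀ : E) (hy₀ : y₀ ∈ MSet T Y) (z₀ : E) (hz₀ : z₀ ∈ MSet T Z)
    (hconv : Tendsto (fun n => α n • y n + (1 - α n) • z n) atTop
      (𝓝 (α₀ • y₀ + (1 - α₀) • z₀))) :
    Tendsto α atTop (𝓝 α₀) ∧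
      (0 < α₀ → Tendsto y atTop (𝓝 y₀)) ∧
      (α₀ < 1 → Tendsto z atTop (𝓝 z₀)) := by
  haveI : CompactSpace ↥T := isCompact_iff_compactSpace.mp hTcomp
  -- closed subsets of the compact metrizable subtype
  have hMYclosed : IsClosed (MSet T Y) := hMY ▸ isClosed_closure
  have hMZclosed : IsClosed (MSet T Z) := hMZ ▸ isClosed_closure
  set MY' : Set ↥T := Subtype.val ⁻¹' (MSet T Y) with hMY'
  set MZ' : Set ↥T := Subtype.val ⁻¹' (MSet T Z) with hMZ'
  have hMY'comp : IsCompact MY' := (hMYclosed.preimage continuous_subtype_val).isCompact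
  have hMZ'comp : IsCompact MZ' := (hMZclosed.preimage continuous_subtype_val).isCompact
  set yT : ℕ → ↥T := fun n => ⟨y n, (hy n).1⟩ with hyTdef
  set zT : ℕ → ↥T := fun n => ⟨z n, (hz n).1⟩ with hzT
  -- the key subsequence extraction
  have key : ∀ ns : ℕ → ℕ, Tendsto ns atTop atTop →
      ∃ ms : ℕ → ℕ, Tendsto (fun n => α (ns (ms n))) atTop (𝓝 α₀) ∧
        (0 < α₀ → Tendsto (fun n => y (ns (ms n))) atTop (𝓝 y₀)) ∧
        (α₀ < 1 → Tendsto (fun n => z (ns (ms n))) atTop (𝓝 z₀)) := by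
    intro ns hns
    obtain ⟨β, hβmem, ms₁, hms₁, hβ⟩ :=
      (isCompact_Icc (a := (0:ℝ)) (b := 1)).tendsto_subseq (x := α ∘ ns) (fun n => hα _)
    obtain ⟨y', hy'mem, ms₂, hms₂, hy'⟩ :=
      hMY'comp.tendsto_subseq (x := yT ∘ ns ∘ ms₁) (fun n => (hy _ : _))
    obtain ⟨z', hz'mem, ms₃, hms₃, hz'⟩ :=
      hMZ'comp.tendsto_subseq (x := zT ∘ ns ∘ ms₁ ∘ ms₂) (fun n => (hz _ : _))
    refine ⟨fun n => ms₁ (ms₂ (ms₃ n)), ?_⟩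
    have hβ' : Tendsto (fun n => α (ns (ms₁ (ms₂ (ms₃ n))))) atTop (𝓝 β) :=
      hβ.comp ((hms₂.comp hms₃).tendsto_atTop)
    have hy'' : Tendsto (fun n => y (ns (ms₁ (ms₂ (ms₃ n))))) atTop (𝓝 (y' : E)) :=
      (continuous_subtype_val.tendsto y').comp (hy'.comp hms₃.tendsto_atTop)
    have hz'' : Tendsto (fun n => z (ns (ms₁ (ms₂ (ms₃ n))))) atTop (𝓝 (z' : E)) :=
      (continuous_subtype_val.tendsto z').comp hz'
    have hcomb : Tendsto (fun n => α (ns (ms₁ (ms₂ (ms₃ n)))) • y (ns (ms₁ (ms₂ (ms₃ n)))) +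
        (1 - α (ns (ms₁ (ms₂ (ms₃ n))))) • z (ns (ms₁ (ms₂ (ms₃ n))))) atTop
        (𝓝 (β • (y' : E) + (1 - β) • (z' : E))) :=
      (hβ'.smul hy'').add ((tendsto_const_nhds.sub hβ').smul hz'')
    have hcomb' : Tendsto (fun n => α (ns (ms₁ (ms₂ (ms₃ n)))) • y (ns (ms₁ (ms₂ (ms₃ n)))) +
        (1 - α (ns (ms₁ (ms₂ (ms₃ n))))) • z (ns (ms₁ (ms₂ (ms₃ n))))) atTop
        (𝓝 (α₀ • y₀ + (1 - α₀) • z₀)) :=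
      hconv.comp (hns.comp ((hms₁.comp (hms₂.comp hms₃)).tendsto_atTop))
    have heq : β • (y' : E) + (1 - β) • (z' : E) = α₀ • y₀ + (1 - α₀) • z₀ :=
      tendsto_nhds_unique hcomb hcomb'
    obtain ⟨hab, hyy, hzz⟩ := uniq_decomp hTcomp hTconv hChoquet hYZ hdisj hYborel hZborel
      hβmem hα₀ hy'mem hy₀ hz'mem hz₀ heq
    subst hab
    refine ⟨hβ', fun h => ?_, fun h => ?_⟩
    · rwa [hyy h] at hy''
    · rwa [hzz h] at hz''
  refine ⟨?_, ?_, ?_⟩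
  · exact tendsto_of_subseq_tendsto fun ns hns => (key ns hns).imp fun ms h => h.1
  · intro h
    exact tendsto_of_subseq_tendsto fun ns hns => (key ns hns).imp fun ms hh => hh.2.1 h
  · intro h
    exact tendsto_of_subseq_tendsto fun ns hns => (key ns hns).imp fun ms hh => hh.2.2 h
end

section
/- Assume T is a metrizable Choquet simplex such that ∂_e(T) = Y ∪ Z with Y ∩ Z = ∅, Y and Z Borel, M_Y = closure(conv(Y)) and M_Z = closure(conv(Z)). Then there exists a continuous affine function f : T → ℝ with 0 ≤ f ≤ 1 such that f(t) = 1 for all t ∈ M_Y and f(t) = 0 for all t ∈ M_Z. -/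
open MeasureTheory

open Classical in
/-- Auxiliary: the candidate function `t ↦ μ_t(Y)` where `μ_t` is the unique representing
measure of `t`. -/
noncomputable def repFun {E : Type*} [AddCommGroup E] [Module ℝ E] [TopologicalSpace E]
    [MeasurableSpace E] (T Y : Set E) (hChoquet : IsChoquetSimplex T) : E → ℝ :=
  fun t => if ht : t ∈ T then ((hChoquet t ht).choose Y).toReal else 0

theorem repFun_apply {E : Type*} [AddCommGroup E] [Module ℝ E] [TopologicalSpace E]
    [MeasurableSpace E] (T Y : Set E) (hChoquet : IsChoquetSimplex T) {t : E} (ht : t ∈ T) :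
    repFun T Y hChoquet t = ((hChoquet t ht).choose Y).toReal := by
  unfold repFun
  exact dif_pos ht

theorem mem_MSet {E : Type*} [AddCommGroup E] [Module ℝ E] [TopologicalSpace E]
    [MeasurableSpace E] {T S : Set E} {t : E} :
    t ∈ MSet T S ↔ t ∈ T ∧ ∃ μ : Measure E, IsProbabilityMeasure μ ∧ μ Tᶜ = 0 ∧
      IsBarycenter μ t ∧ μ (T \ S) = 0 := Iff.rfl

/-- Corollary 2.5 of the paper: there is a continuous affine function `f : T → [0,1]`
which is `1` on `M_Y` and `0` on `M_Z`. -/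
theorem stmt5 {E : Type*} [AddCommGroup E] [Module ℝ E] [TopologicalSpace E]
    [IsTopologicalAddGroup E] [ContinuousSMul ℝ E] [LocallyConvexSpace ℝ E] [T2Space E]
    [MeasurableSpace E] [BorelSpace E]
    (T : Set E) (hTne : T.Nonempty) (hTcomp : IsCompact T) (hTconv : Convex ℝ T)
    (hTmetr : TopologicalSpace.MetrizableSpace T)
    (hChoquet : IsChoquetSimplex T)
    (Y Z : Set E) (hYZ : T.extremePoints ℝ = Y ∪ Z) (hdisj : Y ∩ Z = ∅)
    (hYborel : MeasurableSet Y) (hZborel : MeasurableSet Z)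
    (hMY : MSet T Y = closure (convexHull ℝ Y))
    (hMZ : MSet T Z = closure (convexHull ℝ Z)) :
    ∃ f : E → ℝ, ContinuousOn f T ∧
      (∀ x ∈ T, ∀ y ∈ T, ∀ α ∈ Set.Icc (0 : ℝ) 1,
        f (α • x + (1 - α) • y) = α * f x + (1 - α) * f y) ∧
      (∀ t ∈ T, f t ∈ Set.Icc (0 : ℝ) 1) ∧
      (∀ t ∈ MSet T Y, f t = 1) ∧ (∀ t ∈ MSet T Z, f t = 0) := by
  classical
  -- trivial cases : one of the two `MSet`s is empty
  rcases Set.eq_empty_or_nonempty (MSet T Y) with hYe | hYne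
  · refine ⟨fun _ => 0, continuousOn_const, fun x _ y _ α _ => by ring,
      fun t _ => ⟨le_refl 0, zero_le_one⟩, ?_, fun t _ => rfl⟩
    intro t ht
    rw [hYe] at ht
    exact (Set.notMem_empty t ht).elim
  rcases Set.eq_empty_or_nonempty (MSet T Z) with hZe | hZne
  · refine ⟨fun _ => 1, continuousOn_const, fun x _ y _ α _ => by ring,
      fun t _ => ⟨zero_le_one, le_refl 1⟩, fun t _ => rfl, ?_⟩
    intro t ht
    rw [hZe] at ht
    exact (Set.notMem_empty t ht).elim
  -- basic inclusions
  have hYsub : Y ⊆ T.extremePoints ℝ := hYZ ▸ Set.subset_union_left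
  have hZsub : Z ⊆ T.extremePoints ℝ := hYZ ▸ Set.subset_union_right
  have hYT : Y ⊆ T := hYsub.trans extremePoints_subset
  have hZT : Z ⊆ T := hZsub.trans extremePoints_subset
  -- the representing measure, its properties and uniqueness
  have hrepP : ∀ t (ht : t ∈ T), IsProbabilityMeasure ((hChoquet t ht).choose) ∧
      ((hChoquet t ht).choose) Tᶜ = 0 ∧ IsBarycenter ((hChoquet t ht).choose) t ∧
      ((hChoquet t ht).choose) (T \ (T.extremePoints ℝ)) = 0 :=
    fun t ht => (hChoquet t ht).choose_spec.1
  have hrepU : ∀ t (ht : t ∈ T) (μ : Measure E), IsProbabilityMeasure μ → μ Tᶜ = 0 →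
      IsBarycenter μ t → μ (T \ (T.extremePoints ℝ)) = 0 → μ = (hChoquet t ht).choose :=
    fun t ht μ h1 h2 h3 h4 => (hChoquet t ht).choose_spec.2 μ ⟨h1, h2, h3, h4⟩
  set f : E → ℝ := repFun T Y hChoquet with hfdef
  -- integrability of continuous linear functionals
  have hint : ∀ (μ : Measure E), IsProbabilityMeasure μ → μ Tᶜ = 0 →
      ∀ φ : E →L[ℝ] ℝ, Integrable (fun x => φ x) μ := by
    intro μ hμ hμT φ
    obtain ⟨C, hC⟩ := hTcomp.exists_bound_of_continuousOn φ.continuous.continuousOn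
    refine (integrable_const C).mono' φ.continuous.aestronglyMeasurable ?_
    rw [MeasureTheory.ae_iff]
    refine measure_mono_null (fun x hx => ?_) hμT
    simp only [Set.mem_setOf_eq, not_le] at hx
    exact fun hxT => absurd (hC x hxT) (not_le.mpr hx)
  -- membership of convex combinations
  have hconvmem : ∀ (x : E), x ∈ T → ∀ (y : E), y ∈ T → ∀ α ∈ Set.Icc (0:ℝ) 1,
      α • x + (1 - α) • y ∈ T := fun x hx y hy α hα =>
    hTconv hx hy hα.1 (by linarith [hα.2]) (by ring)
  -- the representing measure of a convex combination is the combination of the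
  -- representing measures (uses uniqueness, i.e. the simplex property)
  have hcombP : ∀ (x : E) (hx : x ∈ T) (y : E) (hy : y ∈ T) (α : ℝ)
      (hα : α ∈ Set.Icc (0:ℝ) 1) (ht : α • x + (1 - α) • y ∈ T),
      (hChoquet _ ht).choose =
        ENNReal.ofReal α • (hChoquet x hx).choose
          + ENNReal.ofReal (1 - α) • (hChoquet y hy).choose := by
    intro x hx y hy α hα ht
    obtain ⟨hPx, hTx, hBx, hEx⟩ := hrepP x hx
    obtain ⟨hPy, hTy, hBy, hEy⟩ := hrepP y hy
    have h1 : (0:ℝ) ≤ α := hα.1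
    have h2 : (0:ℝ) ≤ 1 - α := by linarith [hα.2]
    refine (hrepU _ ht _ ?_ ?_ ?_ ?_).symm
    · constructor
      simp only [Measure.add_apply, Measure.smul_apply, measure_univ, smul_eq_mul, mul_one]
      rw [← ENNReal.ofReal_add h1 h2]
      norm_num
    · rw [Measure.add_apply, Measure.smul_apply, Measure.smul_apply, hTx, hTy, smul_zero,
        smul_zero, add_zero]
    · intro φ
      have h3 : φ (α • x + (1 - α) • y) = α * φ x + (1 - α) * φ y := by
        rw [map_add, _root_.map_smul, _root_.map_smul]
        rfl
      rw [h3, hBx φ, hBy φ,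
        MeasureTheory.integral_add_measure ((hint _ hPx hTx φ).smul_measure ENNReal.ofReal_ne_top)
          ((hint _ hPy hTy φ).smul_measure ENNReal.ofReal_ne_top),
        integral_smul_measure, integral_smul_measure, ENNReal.toReal_ofReal h1,
        ENNReal.toReal_ofReal h2, smul_eq_mul, smul_eq_mul]
    · rw [Measure.add_apply, Measure.smul_apply, Measure.smul_apply, hEx, hEy, smul_zero,
        smul_zero, add_zero]
  -- f is affine on T
  have haff : ∀ x ∈ T, ∀ y ∈ T, ∀ α ∈ Set.Icc (0:ℝ) 1,
      f (α • x + (1 - α) • y) = α * f x + (1 - α) * f y := by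
    intro x hx y hy α hα
    have ht := hconvmem x hx y hy α hα
    haveI := (hrepP x hx).1
    haveI := (hrepP y hy).1
    rw [hfdef, repFun_apply T Y hChoquet ht, repFun_apply T Y hChoquet hx,
      repFun_apply T Y hChoquet hy, hcombP x hx y hy α hα ht]
    simp only [Measure.add_apply, Measure.smul_apply, smul_eq_mul]
    rw [ENNReal.toReal_add (ENNReal.mul_ne_top ENNReal.ofReal_ne_top (measure_ne_top _ _))
      (ENNReal.mul_ne_top ENNReal.ofReal_ne_top (measure_ne_top _ _)),
      ENNReal.toReal_mul, ENNReal.toReal_mul, ENNReal.toReal_ofReal hα.1,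
      ENNReal.toReal_ofReal (by linarith [hα.2] : (0:ℝ) ≤ 1 - α)]
  -- value of the representing measure on Y for points of MSet T Y and MSet T Z
  have hMYval : ∀ t (ht : t ∈ MSet T Y), ((hChoquet t (mem_MSet.mp ht).1).choose) Y = 1 := by
    intro t ht
    obtain ⟨htT, μ, hμP, hμT, hμB, hμY⟩ := mem_MSet.mp ht
    haveI := hμP
    have hE : μ (T \ T.extremePoints ℝ) = 0 :=
      measure_mono_null (Set.diff_subset_diff_right hYsub) hμY
    rw [← hrepU t htT μ hμP hμT hμB hE]
    refine (prob_compl_eq_zero_iff hYborel).mp ?_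
    refine measure_mono_null (fun x hx => ?_) (measure_union_null hμT hμY)
    by_cases hxT : x ∈ T
    · exact Or.inr ⟨hxT, hx⟩
    · exact Or.inl hxT
  have hMZval : ∀ t (ht : t ∈ MSet T Z), ((hChoquet t (mem_MSet.mp ht).1).choose) Y = 0 := by
    intro t ht
    obtain ⟨htT, μ, hμP, hμT, hμB, hμZ⟩ := mem_MSet.mp ht
    have hE : μ (T \ T.extremePoints ℝ) = 0 :=
      measure_mono_null (Set.diff_subset_diff_right hZsub) hμZ
    rw [← hrepU t htT μ hμP hμT hμB hE]
    refine measure_mono_null (fun y hy => (Set.mem_diff y).mpr ⟨hYT hy, fun hyZ => ?_⟩) hμZ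
    exact absurd (Set.mem_inter hy hyZ) (by rw [hdisj]; exact Set.notMem_empty y)
  -- boundary values of f
  have hfY : ∀ t ∈ MSet T Y, f t = 1 := by
    intro t ht
    rw [hfdef, repFun_apply T Y hChoquet (mem_MSet.mp ht).1, hMYval t ht, ENNReal.toReal_one]
  have hfZ : ∀ t ∈ MSet T Z, f t = 0 := by
    intro t ht
    rw [hfdef, repFun_apply T Y hChoquet (mem_MSet.mp ht).1, hMZval t ht, ENNReal.toReal_zero]
  -- range of f
  have hfrange : ∀ t ∈ T, f t ∈ Set.Icc (0:ℝ) 1 := by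
    intro t ht
    haveI := (hrepP t ht).1
    rw [hfdef, repFun_apply T Y hChoquet ht]
    refine ⟨ENNReal.toReal_nonneg, ?_⟩
    rw [← ENNReal.toReal_one]
    exact ENNReal.toReal_mono ENNReal.one_ne_top prob_le_one
  -- the geometric part: T is the convex join of A and B
  set A := closure (convexHull ℝ Y) with hA
  set B := closure (convexHull ℝ Z) with hB
  have hAT : A ⊆ T := fun x hx => (mem_MSet.mp (hMY ▸ hx : x ∈ MSet T Y)).1
  have hBT : B ⊆ T := fun x hx => (mem_MSet.mp (hMZ ▸ hx : x ∈ MSet T Z)).1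
  have hAconv : Convex ℝ A := (convex_convexHull ℝ Y).closure
  have hBconv : Convex ℝ B := (convex_convexHull ℝ Z).closure
  have hAcomp : IsCompact A := hTcomp.of_isClosed_subset isClosed_closure hAT
  have hBcomp : IsCompact B := hTcomp.of_isClosed_subset isClosed_closure hBT
  have hAne : A.Nonempty := by rw [← hMY]; exact hYne
  have hBne : B.Nonempty := by rw [← hMZ]; exact hZne
  have hYA : Y ⊆ A := fun y hy => subset_closure (subset_convexHull ℝ Y hy)
  have hZB : Z ⊆ B := fun z hz => subset_closure (subset_convexHull ℝ Z hz)
  -- the convex join is compact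
  have himg : convexJoin ℝ A B =
      (fun p : ℝ × E × E => p.1 • p.2.1 + (1 - p.1) • p.2.2) ''
        ((Set.Icc (0:ℝ) 1) ×ˢ A ×ˢ B) := by
    ext x
    constructor
    · intro hx
      rw [mem_convexJoin] at hx
      obtain ⟨a, ha, b, hb, u, v, hu, hv, huv, rfl⟩ := hx
      refine ⟨(u, a, b), ⟨⟨hu, by linarith⟩, ha, hb⟩, ?_⟩
      have : v = 1 - u := by linarith
      rw [this]
    · rintro ⟨⟨u, a, b⟩, ⟨⟨hu0, hu1⟩, ha, hb⟩, rfl⟩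
      exact mem_convexJoin.mpr ⟨a, ha, b, hb, u, 1 - u, hu0, by linarith, by ring, rfl⟩
  have hjoincomp : IsCompact (convexJoin ℝ A B) := by
    rw [himg]
    refine (isCompact_Icc.prod (hAcomp.prod hBcomp)).image ?_
    exact (continuous_fst.smul (continuous_fst.comp continuous_snd)).add
      ((continuous_const.sub continuous_fst).smul (continuous_snd.comp continuous_snd))
  -- T ⊆ convexJoin A B by Krein–Milman
  have hTjoin : T ⊆ convexJoin ℝ A B := by
    intro t ht
    have h0 : t ∈ closure (convexHull ℝ (T.extremePoints ℝ)) :=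
      (closure_convexHull_extremePoints hTcomp hTconv).symm ▸ ht
    have h1 : convexHull ℝ (T.extremePoints ℝ) ⊆ convexJoin ℝ A B := by
      rw [hYZ]
      refine (convexHull_mono (Set.union_subset_union hYA hZB)).trans ?_
      rw [hAconv.convexHull_union hBconv hAne hBne]
    have h2 : closure (convexHull ℝ (T.extremePoints ℝ)) ⊆ convexJoin ℝ A B :=
      closure_minimal h1 hjoincomp.isClosed
    exact h2 h0
  have hTsub : ∀ t ∈ T, ∃ α a b, α ∈ Set.Icc (0:ℝ) 1 ∧ a ∈ A ∧ b ∈ B ∧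
      t = α • a + (1 - α) • b := by
    intro t ht
    obtain ⟨a, ha, b, hb, u, v, hu, hv, huv, hx⟩ := mem_convexJoin.mp (hTjoin ht)
    refine ⟨u, a, b, ⟨hu, by linarith⟩, ha, hb, ?_⟩
    rw [← hx]
    have : v = 1 - u := by linarith
    rw [this]
  -- the key value formula
  have hkey : ∀ (α : ℝ), α ∈ Set.Icc (0:ℝ) 1 → ∀ a ∈ A, ∀ b ∈ B,
      f (α • a + (1 - α) • b) = α := by
    intro α hα a ha b hb
    have ha' : a ∈ MSet T Y := by rw [hMY]; exact ha
    have hb' : b ∈ MSet T Z := by rw [hMZ]; exact hb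
    rw [haff a (hAT ha) b (hBT hb) α hα, hfY a ha', hfZ b hb']
    ring
  -- continuity via the quotient map from the compact parameter space
  have hcont : ContinuousOn f T := by
    haveI : CompactSpace (Set.Icc (0:ℝ) 1) := isCompact_iff_compactSpace.mp isCompact_Icc
    haveI : CompactSpace A := isCompact_iff_compactSpace.mp hAcomp
    haveI : CompactSpace B := isCompact_iff_compactSpace.mp hBcomp
    let g : (Set.Icc (0:ℝ) 1) × A × B → T := fun p =>
      ⟨(p.1 : ℝ) • (p.2.1 : E) + (1 - (p.1 : ℝ)) • (p.2.2 : E),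
        hconvmem _ (hAT p.2.1.2) _ (hBT p.2.2.2) _ p.1.2⟩
    have hgc : Continuous g := by
      refine Continuous.subtype_mk ?_ _
      exact ((continuous_subtype_val.comp continuous_fst).smul
          (continuous_subtype_val.comp (continuous_fst.comp continuous_snd))).add
        ((continuous_const.sub (continuous_subtype_val.comp continuous_fst)).smul
          (continuous_subtype_val.comp (continuous_snd.comp continuous_snd)))
    have hgs : Function.Surjective g := by
      rintro ⟨t, ht⟩
      obtain ⟨α, a, b, hα, ha, hb, hts⟩ := hTsub t ht
      exact ⟨(⟨α, hα⟩, ⟨a, ha⟩, ⟨b, hb⟩), by simp [g, ← hts]⟩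
    have hq : Topology.IsQuotientMap g := hgc.isClosedMap.isQuotientMap hgc hgs
    rw [continuousOn_iff_continuous_restrict, hq.continuous_iff]
    have heq : T.domRestrict f ∘ g = fun p => (p.1 : ℝ) := by
      funext p
      exact hkey (p.1 : ℝ) p.1.2 _ p.2.1.2 _ p.2.2.2
    rw [heq]
    exact continuous_subtype_val.comp continuous_fst
  exact ⟨f, hcont, haff, hfrange, hfY, hfZ⟩
end

section
/- Let γ : S → T be the map γ(s) = ℓ_T(s)⁻¹ • s. Then for every subset K ⊆ S, γ maps the convex hull of K onto the convex hull of γ(K): γ(conv(K)) = conv(γ(K)). -/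
/-- From the proof of part (2) of Proposition 2.7 of the paper: the base-change map
`γ : S → T`, `γ s = (ℓ_T s)⁻¹ • s`, maps the convex hull of any `K ⊆ S` onto the convex
hull of `γ '' K`. -/
theorem stmt8 {E : Type*} [AddCommGroup E] [Module ℝ E] [TopologicalSpace E] [T2Space E]
    [IsTopologicalAddGroup E] [ContinuousSMul ℝ E]
    (C : Set E) (hCadd : ∀ x ∈ C, ∀ y ∈ C, x + y ∈ C)
    (hCsmul : ∀ r : ℝ, 0 ≤ r → ∀ x ∈ C, r • x ∈ C)
    (ℓS ℓT : E →L[ℝ] ℝ)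
    (hℓS : ∀ x ∈ C, x ≠ 0 → 0 < ℓS x) (hℓT : ∀ x ∈ C, x ≠ 0 → 0 < ℓT x)
    (K : Set E) (hK : K ⊆ {x ∈ C | ℓS x = 1}) :
    (fun x => (ℓT x)⁻¹ • x) '' (convexHull ℝ K) =
      convexHull ℝ ((fun x => (ℓT x)⁻¹ • x) '' K) := by
  have hSconv : Convex ℝ {x ∈ C | ℓS x = 1} := by
    intro x hx y hy a b ha hb hab
    refine ⟨hCadd _ (hCsmul a ha _ hx.1) _ (hCsmul b hb _ hy.1), ?_⟩
    simp only [map_add, map_smul, smul_eq_mul, hx.2, hy.2]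
    linarith
  have hsub : convexHull ℝ K ⊆ {x ∈ C | ℓS x = 1} := convexHull_min hK hSconv
  have hpos : ∀ x ∈ convexHull ℝ K, 0 < ℓT x := by
    intro x hx
    obtain ⟨hxC, hxS⟩ := hsub hx
    refine hℓT x hxC ?_
    rintro rfl
    simp at hxS
  apply Set.Subset.antisymm
  · rintro _ ⟨x, hx, rfl⟩
    have main : convexHull ℝ K ⊆
        {z | z ∈ convexHull ℝ K ∧
          (ℓT z)⁻¹ • z ∈ convexHull ℝ ((fun x => (ℓT x)⁻¹ • x) '' K)} := by
      apply convexHull_min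
      · intro k hk
        exact ⟨subset_convexHull ℝ K hk, subset_convexHull ℝ _ ⟨k, hk, rfl⟩⟩
      · intro u hu v hv a b ha hb hab
        have hz : a • u + b • v ∈ convexHull ℝ K :=
          (convex_convexHull ℝ K) hu.1 hv.1 ha hb hab
        refine ⟨hz, ?_⟩
        have hpu := hpos u hu.1
        have hpv := hpos v hv.1
        have hpz := hpos _ hz
        have h1 : ℓT u ≠ 0 := hpu.ne'
        have h2 : ℓT v ≠ 0 := hpv.ne'
        have h3 : ℓT (a • u + b • v) ≠ 0 := hpz.ne'
        have hlin : ℓT (a • u + b • v) = a * ℓT u + b * ℓT v := by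
          simp [map_add, map_smul]
        have h4 : a * ℓT u + b * ℓT v ≠ 0 := hlin ▸ h3
        have key : (ℓT (a • u + b • v))⁻¹ • (a • u + b • v) =
            (a * ℓT u / ℓT (a • u + b • v)) • ((ℓT u)⁻¹ • u) +
              (b * ℓT v / ℓT (a • u + b • v)) • ((ℓT v)⁻¹ • v) := by
          match_scalars <;> field_simp
        rw [key]
        have hsum : a * ℓT u / ℓT (a • u + b • v) + b * ℓT v / ℓT (a • u + b • v) = 1 := by
          rw [hlin, ← add_div, div_self h4]
        exact (convex_convexHull ℝ _) hu.2 hv.2 (by positivity) (by positivity) hsum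
    exact (main hx).2
  · apply convexHull_min
    · rintro _ ⟨k, hk, rfl⟩
      exact ⟨k, subset_convexHull ℝ K hk, rfl⟩
    · rintro _ ⟨x, hx, rfl⟩ _ ⟨y, hy, rfl⟩ a b ha hb hab
      have hpx := hpos x hx
      have hpy := hpos y hy
      have hab' : 0 < a ∨ 0 < b := by
        rcases ha.lt_or_eq with h | h
        · exact Or.inl h
        · exact Or.inr (by nlinarith)
      have hcpos : 0 < a / ℓT x + b / ℓT y := by
        rcases hab' with h | h
        · exact add_pos_of_pos_of_nonneg (div_pos h hpx) (div_nonneg hb hpy.le)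
        · exact add_pos_of_nonneg_of_pos (div_nonneg ha hpx.le) (div_pos h hpy)
      obtain ⟨c, hc⟩ : ∃ c : ℝ, c = a / ℓT x + b / ℓT y := ⟨_, rfl⟩
      rw [← hc] at hcpos
      have h1 : ℓT x ≠ 0 := hpx.ne'
      have h2 : ℓT y ≠ 0 := hpy.ne'
      have h3 : c ≠ 0 := hcpos.ne'
      have hwsum : a / (c * ℓT x) + b / (c * ℓT y) = 1 := by
        rw [div_mul_eq_div_div_swap, div_mul_eq_div_div_swap, ← add_div, ← hc, div_self h3]
      have hw1 : 0 ≤ a / (c * ℓT x) := div_nonneg ha (by positivity)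
      have hw2 : 0 ≤ b / (c * ℓT y) := div_nonneg hb (by positivity)
      have hzmem : (a / (c * ℓT x)) • x + (b / (c * ℓT y)) • y ∈ convexHull ℝ K :=
        (convex_convexHull ℝ K) hx hy hw1 hw2 hwsum
      refine ⟨(a / (c * ℓT x)) • x + (b / (c * ℓT y)) • y, hzmem, ?_⟩
      have e1 : a / (c * ℓT x) * ℓT x = a / c := by
        field_simp
      have e2 : b / (c * ℓT y) * ℓT y = b / c := by
        field_simp
      have hℓz : ℓT ((a / (c * ℓT x)) • x + (b / (c * ℓT y)) • y) = c⁻¹ := by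
        rw [map_add, map_smul, map_smul, smul_eq_mul, smul_eq_mul, e1, e2,
          ← add_div, hab, one_div]
      show (ℓT ((a / (c * ℓT x)) • x + (b / (c * ℓT y)) • y))⁻¹ •
          ((a / (c * ℓT x)) • x + (b / (c * ℓT y)) • y)
        = a • (ℓT x)⁻¹ • x + b • (ℓT y)⁻¹ • y
      rw [hℓz, inv_inv]
      match_scalars <;> rw [mul_one, mul_one] <;> field_simp <;> ring
end

section
/- Let τ be a tracial state on A, let a, b ∈ A with 0 ≤ a ≤ 1 and 0 ≤ b ≤ 1, and let ε ∈ (0, 1/2). If τ(a) > 1 − ε, then τ(b·a·b) > τ(b²) − √ε. -/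
/-!
Put `u = 1 - a`. By the trace property `τ(b²) - τ(bab) = τ(b u b) = τ(u b²) ≥ 0`, and
`τ(u b²)` is the GNS inner product of `u` and `b²`. Cauchy–Schwarz bounds its square by
`τ(u²) τ(b⁴) ≤ τ(u) · 1 < ε`, since `0 ≤ x ≤ 1` implies `x² ≤ x`.
-/

open scoped ComplexOrder

theorem map_nonneg_of_map_star_mul_self_nonneg {R M F : Type*} [NonUnitalSemiring R]
    [PartialOrder R] [StarRing R] [StarOrderedRing R] [AddCommMonoid M] [PartialOrder M]
    [IsOrderedAddMonoid M] [FunLike F R M] [AddMonoidHomClass F R M] (f : F)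
    (hf : ∀ s, 0 ≤ f (star s * s)) {x : R} (hx : 0 ≤ x) : 0 ≤ f x := by
  rw [StarOrderedRing.nonneg_iff] at hx
  induction hx using AddSubmonoid.closure_induction with
  | mem _ hs => obtain ⟨s, rfl⟩ := hs; exact hf s
  | zero => rw [map_zero]
  | add _ _ _ _ hx hy => rw [map_add]; exact add_nonneg hx hy

theorem CStarAlgebra.mul_self_le_self {A : Type*} [CStarAlgebra A] [PartialOrder A]
    [StarOrderedRing A] {a : A} (h0 : 0 ≤ a) (h1 : a ≤ 1) : a * a ≤ a := by
  simpa [sq] using CStarAlgebra.pow_antitone h0 h1 one_le_two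

namespace PositiveLinearMap

theorem norm_apply_star_mul_sq_le {A : Type*} [NonUnitalCStarAlgebra A] [PartialOrder A]
    [StarOrderedRing A] (f : A →ₚ[ℂ] ℂ) (x y : A) :
    ‖f (star x * y)‖ ^ 2 ≤ (f (star x * x)).re * (f (star y * y)).re := by
  have hcs := norm_inner_le_norm (𝕜 := ℂ) (f.toPreGNS x) (f.toPreGNS y)
  have hnorm_sq (z : A) : ‖f.toPreGNS z‖ ^ 2 = (f (star z * z)).re :=
    Real.sq_sqrt (f.map_nonneg (star_mul_self_nonneg z)).1
  rw [preGNS_inner_def] at hcs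
  rw [← hnorm_sq, ← hnorm_sq, ← mul_pow]
  exact pow_le_pow_left₀ (norm_nonneg _) hcs 2

theorem norm_apply_mul_le_sqrt {A : Type*} [CStarAlgebra A] [PartialOrder A]
    [StarOrderedRing A] (f : A →ₚ[ℂ] ℂ) (hf1 : f 1 = 1) {u v : A} (hu0 : 0 ≤ u) (hu1 : u ≤ 1)
    (hv0 : 0 ≤ v) (hv1 : v ≤ 1) : ‖f (u * v)‖ ≤ √(f u).re := by
  have hre_mono {x y : A} (h : x ≤ y) : (f x).re ≤ (f y).re :=
    (Complex.le_def.mp (OrderHomClass.mono f h)).1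
  have hcs := f.norm_apply_star_mul_sq_le u v
  rw [(IsSelfAdjoint.of_nonneg hu0).star_eq, (IsSelfAdjoint.of_nonneg hv0).star_eq] at hcs
  refine Real.le_sqrt_of_sq_le <| calc
    ‖f (u * v)‖ ^ 2 ≤ (f (u * u)).re * (f (v * v)).re := hcs
    _ ≤ (f (u * u)).re * (f 1).re := by
      refine mul_le_mul_of_nonneg_left ?_
        (f.map_nonneg (IsSelfAdjoint.of_nonneg hu0).mul_self_nonneg).1
      exact hre_mono ((CStarAlgebra.mul_self_le_self hv0 hv1).trans hv1)
    _ ≤ (f u).re := by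
      rw [hf1, Complex.one_re, mul_one]
      exact hre_mono (CStarAlgebra.mul_self_le_self hu0 hu1)

end PositiveLinearMap

theorem stmt10_general {A : Type*} [CStarAlgebra A] [PartialOrder A] [StarOrderedRing A]
    (τ : A →ₗ[ℂ] ℂ)
    (hτ1 : τ 1 = 1)
    (hτpos : ∀ x : A, 0 ≤ τ (star x * x))
    (hτtr : ∀ x y : A, τ (x * y) = τ (y * x))
    (a b : A) (ha0 : 0 ≤ a) (ha1 : a ≤ 1) (hb0 : 0 ≤ b) (hb1 : b ≤ 1)
    (ε : ℝ)
    (hτa : 1 - (ε : ℂ) < τ a) :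
    τ (b * b) - (Real.sqrt ε : ℂ) < τ (b * a * b) := by
  let f : A →ₚ[ℂ] ℂ := .mk₀ τ fun _ ↦ map_nonneg_of_map_star_mul_self_nonneg τ hτpos
  have hgap : τ (b * b) - τ (b * a * b) = τ (b * (1 - a) * b) := by
    rw [← map_sub, mul_sub, sub_mul, mul_one]
  have hgap_nonneg : 0 ≤ τ (b * (1 - a) * b) :=
    f.map_nonneg (conjugate_nonneg_of_nonneg (sub_nonneg.2 ha1) hb0)
  have hdefect : (τ (1 - a)).re < ε := by
    have := (Complex.lt_def.mp hτa).1
    simp only [map_sub, hτ1, Complex.sub_re, Complex.one_re, Complex.ofReal_re] at this ⊢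
    linarith
  have hgap_lt : ‖τ (b * (1 - a) * b)‖ < √ε := by
    rw [mul_assoc, hτtr, mul_assoc]
    refine (f.norm_apply_mul_le_sqrt hτ1 (sub_nonneg.2 ha1) (sub_le_self _ ha0)
      (IsSelfAdjoint.of_nonneg hb0).mul_self_nonneg
      ((CStarAlgebra.mul_self_le_self hb0 hb1).trans hb1)).trans_lt ?_
    exact Real.sqrt_lt_sqrt (f.map_nonneg (sub_nonneg.2 ha1)).1 hdefect
  rw [sub_lt_comm, hgap, Complex.eq_coe_norm_of_nonneg hgap_nonneg]
  exact_mod_cast hgap_lt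

/-- Lemma 4.1 of the paper (Lemma `Lortho`): if `τ` is a tracial state on a unital
C*-algebra `A`, `0 ≤ a ≤ 1`, `0 ≤ b ≤ 1`, `ε ∈ (0, 1/2)` and `τ(a) > 1 - ε`, then
`τ(b·a·b) > τ(b²) - √ε`. -/
theorem stmt10 {A : Type*} [CStarAlgebra A] [PartialOrder A] [StarOrderedRing A]
    (τ : A →ₗ[ℂ] ℂ)
    (hτ1 : τ 1 = 1)
    (hτpos : ∀ x : A, 0 ≤ τ (star x * x))
    (hτtr : ∀ x y : A, τ (x * y) = τ (y * x))
    (a b : A) (ha0 : 0 ≤ a) (ha1 : a ≤ 1) (hb0 : 0 ≤ b) (hb1 : b ≤ 1)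
    (ε : ℝ) (hε0 : 0 < ε) (hε1 : ε < 1 / 2)
    (hτa : 1 - (ε : ℂ) < τ a) :
    τ (b * b) - (Real.sqrt ε : ℂ) < τ (b * a * b) :=
  stmt10_general τ hτ1 hτpos hτtr a b ha0 ha1 hb0 hb1 ε hτa
end
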